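/- arXiv:1710.02789 — 7 statements merged into one kernel-verified Lean document; each statement's English description precedes it below -/
import Mathlib

section
/- Let $F(z)$ be a meromorphic function on a vertical strip $\sigma_1 < \mathrm{Re}(z) < \sigma_2$, holomorphic away from possible simple poles at $z = 0, \pm 1$, and vertically of moderate growth (i.e., for any closed substrip there exist $N, \delta > 0$ with $|F(z)| \ll (1+|\mathrm{Im}(z)|)^N$ for $|\mathrm{Im}(z)| \geq \delta$). Suppose there exists $\sigma \in (\sigma_1, \sigma_2)$ with $\sigma \neq 0, \pm 1$ such that $\int_{\mathrm{Re}(z)=\sigma} F(z)\beta(z)\,dz = 0$ for all entire functions $\beta$ that are rapidly decreasing on vertical strips and satisfy $\beta(0) = \beta(\pm 1) = \beta'(\pm 1) = 0$. Then $F(z) = 0$ identically on the strip. -/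
/-!
Pairing `F` against `z (z² - 1)² exp (z² - s (z - σ))` for real `s` computes the Fourier
transform at `s / 2π` of `g(t) = F(σ + it) · z (z² - 1)² exp z²` (with `z = σ + it`), because on
the line `exp (-s (z - σ)) = e^{-ist}`. The factor `z (z² - 1)²` cancels the poles, so `g` is
continuous, and the Gaussian beats the moderate growth of `F`, so `g` is integrable. Hence
`g = 0` by Fourier inversion, `G` vanishes on the line `Re z = σ`, and by the identity theorem
on the whole strip.
-/

open Complex MeasureTheory Filter Topology
open scoped FourierTransform

theorem Continuous.eq_zero_of_fourier_eq_zero {V E : Type*} [NormedAddCommGroup V]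
    [InnerProductSpace ℝ V] [MeasurableSpace V] [BorelSpace V] [FiniteDimensional ℝ V]
    [NormedAddCommGroup E] [NormedSpace ℂ E] [CompleteSpace E] {f : V → E}
    (hc : Continuous f) (hf : Integrable f) (h : 𝓕 f = 0) : f = 0 := by
  have := hc.fourierInv_fourier_eq hf (by rw [h]; exact integrable_zero _ _ _)
  rw [← this, h]
  ext v
  simp [Real.fourierInv_eq]

lemma frequently_nhdsNE_of_vertical_line {P : ℂ → Prop} (z : ℂ) (h : ∀ t : ℝ, P (z + t * I)) :
    ∃ᶠ w in 𝓝[≠] z, P w := by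
  have hlim : Tendsto (fun t : ℝ => z + t * I) (𝓝[≠] 0) (𝓝[≠] z) := by
    refine tendsto_nhdsWithin_of_tendsto_nhds_of_eventually_within _ ?_ ?_
    · exact Continuous.tendsto' (f := fun t : ℝ => z + t * I) (by fun_prop) 0 z (by simp)
        |>.mono_left nhdsWithin_le_nhds
    · filter_upwards [self_mem_nhdsWithin] with t ht
      simpa using ht
  exact hlim.frequently (Frequently.of_forall h)

def RapidDecayOnVerticalStrips (β : ℂ → ℂ) : Prop :=
  ∀ a b N : ℝ, ∃ C : ℝ, ∀ z : ℂ, a ≤ z.re → z.re ≤ b → ‖β z‖ ≤ C * (1 + |z.im|) ^ (-N)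

noncomputable def gaussTestFun (σ s : ℝ) (z : ℂ) : ℂ :=
  z * (z ^ 2 - 1) ^ 2 * exp (z ^ 2 - s * (z - σ))

lemma one_add_abs_pow_mul_exp_neg_sq_le (k : ℕ) (t : ℝ) :
    (1 + |t|) ^ k * Real.exp (-t ^ 2) ≤ Real.exp (k ^ 2 / 4) := by
  calc (1 + |t|) ^ k * Real.exp (-t ^ 2)
      ≤ Real.exp |t| ^ k * Real.exp (-t ^ 2) := by
        gcongr
        linarith [Real.add_one_le_exp |t|]
    _ = Real.exp (k * |t| - |t| ^ 2) := by
        rw [← Real.exp_nat_mul, ← Real.exp_add, sq_abs]; ring_nf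
    _ ≤ Real.exp (k ^ 2 / 4) := by
        gcongr
        nlinarith [sq_nonneg (|t| - k / 2)]

lemma norm_mul_sq_sub_one_sq_le {M : ℝ} {z : ℂ} (hz : |z.re| ≤ M) :
    ‖z * (z ^ 2 - 1) ^ 2‖ ≤ 4 * ((M + 1) * (1 + |z.im|)) ^ 5 := by
  have hM : 0 ≤ M := (abs_nonneg _).trans hz
  set R := (M + 1) * (1 + |z.im|) with hRdef
  have hR : 1 ≤ R := by nlinarith [abs_nonneg z.im]
  have hzR : ‖z‖ ≤ R := by nlinarith [norm_le_abs_re_add_abs_im z, abs_nonneg z.im]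
  have hsq : ‖z ^ 2 - 1‖ ≤ 2 * R ^ 2 :=
    calc ‖z ^ 2 - 1‖ ≤ ‖z‖ ^ 2 + 1 := (norm_sub_le _ _).trans_eq (by rw [norm_pow, norm_one])
      _ ≤ 2 * R ^ 2 := by nlinarith [norm_nonneg z]
  calc ‖z * (z ^ 2 - 1) ^ 2‖ = ‖z‖ * ‖z ^ 2 - 1‖ ^ 2 := by rw [norm_mul, norm_pow]
    _ ≤ R * (2 * R ^ 2) ^ 2 := by gcongr
    _ = 4 * R ^ 5 := by ring

lemma norm_exp_sq_sub_le (σ s : ℝ) {M : ℝ} {z : ℂ} (hz : |z.re| ≤ M) :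
    ‖exp (z ^ 2 - s * (z - σ))‖ ≤ Real.exp (M ^ 2 + |s| * (M + |σ|)) * Real.exp (-z.im ^ 2) := by
  rw [norm_exp, ← Real.exp_add]
  gcongr
  have hre : (z ^ 2 - s * (z - σ)).re = z.re ^ 2 - z.im ^ 2 - s * (z.re - σ) := by
    simp [sq]
  have h1 : z.re ^ 2 ≤ M ^ 2 := by simpa [sq_abs] using pow_le_pow_left₀ (abs_nonneg _) hz 2
  have h2 : -(s * (z.re - σ)) ≤ |s| * (M + |σ|) :=
    calc -(s * (z.re - σ)) ≤ |s| * |z.re - σ| := by rw [← abs_mul]; exact neg_le_abs _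
      _ ≤ |s| * (M + |σ|) := by gcongr; linarith [abs_sub z.re σ]
  rw [hre]; linarith

lemma norm_gaussTestFun_le (σ s : ℝ) {M : ℝ} {z : ℂ} (hz : |z.re| ≤ M) :
    ‖gaussTestFun σ s z‖ ≤ 4 * (M + 1) ^ 5 * Real.exp (M ^ 2 + |s| * (M + |σ|)) *
      ((1 + |z.im|) ^ 5 * Real.exp (-z.im ^ 2)) := by
  have hM : 0 ≤ M := (abs_nonneg _).trans hz
  calc ‖gaussTestFun σ s z‖
      = ‖z * (z ^ 2 - 1) ^ 2‖ * ‖exp (z ^ 2 - s * (z - σ))‖ := norm_mul _ _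
    _ ≤ 4 * ((M + 1) * (1 + |z.im|)) ^ 5 *
          (Real.exp (M ^ 2 + |s| * (M + |σ|)) * Real.exp (-z.im ^ 2)) := by
        gcongr
        exacts [norm_mul_sq_sub_one_sq_le hz, norm_exp_sq_sub_le σ s hz]
    _ = _ := by ring

lemma rapidDecayOnVerticalStrips_gaussTestFun (σ s : ℝ) :
    RapidDecayOnVerticalStrips (gaussTestFun σ s) := by
  intro a b N
  set M := max |a| |b|
  set K := 4 * (M + 1) ^ 5 * Real.exp (M ^ 2 + |s| * (M + |σ|))
  set m := ⌈N⌉₊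
  refine ⟨K * Real.exp ((5 + m : ℕ) ^ 2 / 4), fun z hza hzb => ?_⟩
  have hzM : |z.re| ≤ M := abs_le_max_abs_abs hza hzb
  have hu : 1 ≤ 1 + |z.im| := le_add_of_nonneg_right (abs_nonneg _)
  have hu0 : 0 < 1 + |z.im| := by positivity
  have hdecay : (1 + |z.im|) ^ 5 * Real.exp (-z.im ^ 2) ≤
      Real.exp ((5 + m : ℕ) ^ 2 / 4) * (1 + |z.im|) ^ (-N) := by
    have hm : (1 + |z.im|) ^ (-(m : ℝ)) ≤ (1 + |z.im|) ^ (-N) :=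
      Real.rpow_le_rpow_of_exponent_le hu (neg_le_neg (Nat.le_ceil N))
    calc (1 + |z.im|) ^ 5 * Real.exp (-z.im ^ 2)
        = (1 + |z.im|) ^ (5 + m) * Real.exp (-z.im ^ 2) * (1 + |z.im|) ^ (-(m : ℝ)) := by
          rw [Real.rpow_neg hu0.le, Real.rpow_natCast, pow_add]
          field_simp
      _ ≤ Real.exp ((5 + m : ℕ) ^ 2 / 4) * (1 + |z.im|) ^ (-N) := by
          gcongr
          exact one_add_abs_pow_mul_exp_neg_sq_le _ _
  calc ‖gaussTestFun σ s z‖ ≤ K * ((1 + |z.im|) ^ 5 * Real.exp (-z.im ^ 2)) :=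
        norm_gaussTestFun_le σ s hzM
    _ ≤ K * (Real.exp ((5 + m : ℕ) ^ 2 / 4) * (1 + |z.im|) ^ (-N)) := by gcongr
    _ = _ := by ring

lemma hasDerivAt_gaussTestFun (σ s : ℝ) (z : ℂ) :
    HasDerivAt (gaussTestFun σ s)
      ((z ^ 2 - 1) * (5 * z ^ 2 - 1 + z * (z ^ 2 - 1) * (2 * z - s)) *
        exp (z ^ 2 - s * (z - σ))) z := by
  have hpoly := (hasDerivAt_id' z).mul (((hasDerivAt_pow 2 z).sub_const 1).pow 2)
  have hexp := ((hasDerivAt_pow 2 z).sub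
    (((hasDerivAt_id' z).sub_const (σ : ℂ)).const_mul (s : ℂ))).cexp
  exact (hpoly.mul hexp).congr_deriv <| by
    simp only [Pi.mul_apply, Pi.pow_apply, Pi.sub_apply]; ring

lemma differentiable_gaussTestFun (σ s : ℝ) : Differentiable ℂ (gaussTestFun σ s) :=
  fun z => (hasDerivAt_gaussTestFun σ s z).differentiableAt

lemma deriv_gaussTestFun_eq_zero (σ s : ℝ) {z : ℂ} (hz : z ^ 2 = 1) :
    deriv (gaussTestFun σ s) z = 0 := by
  simp [(hasDerivAt_gaussTestFun σ s z).deriv, hz]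

lemma gaussTestFun_eq_zero (σ s : ℝ) {z : ℂ} (hz : z * (z ^ 2 - 1) = 0) :
    gaussTestFun σ s z = 0 := by
  simp only [gaussTestFun, sq (z ^ 2 - 1), ← mul_assoc, hz, zero_mul]

lemma gaussTestFun_vertical_line (σ s t : ℝ) :
    gaussTestFun σ s (σ + t * I) = exp (↑(-s * t) * I) * gaussTestFun σ 0 (σ + t * I) := by
  simp only [gaussTestFun]
  rw [mul_left_comm, ← exp_add]
  congr 2
  push_cast; ring

lemma mul_sq_sub_one_ne_zero {z : ℂ} (h0 : z ≠ 0) (h1 : z ≠ 1) (hm1 : z ≠ -1) :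
    z * (z ^ 2 - 1) ≠ 0 :=
  mul_ne_zero h0 (sub_ne_zero.2 fun h => (sq_eq_one_iff.1 h).elim h1 hm1)

lemma div_mul_gaussTestFun (σ s : ℝ) {z : ℂ} (hz : z * (z ^ 2 - 1) ≠ 0) (w : ℂ) :
    w / (z * (z ^ 2 - 1)) * gaussTestFun σ s z = w * ((z ^ 2 - 1) * exp (z ^ 2 - s * (z - σ))) := by
  rw [gaussTestFun, div_mul_eq_mul_div, div_eq_iff hz]
  ring

lemma eqOn_zero_of_eq_zero_on_vertical_line {U : Set ℂ} {G : ℂ → ℂ} (hU : IsOpen U)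
    (hUc : IsPreconnected U) (hG : DifferentiableOn ℂ G U) {z : ℂ} (hz : z ∈ U)
    (h : ∀ t : ℝ, G (z + t * I) = 0) : Set.EqOn G 0 U :=
  (hG.analyticOnNhd hU).eqOn_zero_of_preconnected_of_frequently_eq_zero hUc hz
    (frequently_nhdsNE_of_vertical_line z h)

lemma integrable_vertical_line_mul {F β : ℂ → ℂ} {σ N C δ : ℝ}
    (hβ : RapidDecayOnVerticalStrips β)
    (hcont : Continuous fun t : ℝ => F (σ + t * I) * β (σ + t * I))
    (hF : ∀ t : ℝ, δ ≤ |t| → ‖F (σ + t * I)‖ ≤ C * (1 + |t|) ^ N) :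
    Integrable fun t : ℝ => F (σ + t * I) * β (σ + t * I) := by
  obtain ⟨C', hβC'⟩ := hβ σ σ (N + 2)
  refine hcont.locallyIntegrable.integrable_of_isBigO_cocompact
    (g := fun t : ℝ => (1 + ‖t‖) ^ (-2 : ℝ)) ?_
    ((integrable_one_add_norm (by norm_num)).integrableAtFilter _)
  refine Asymptotics.IsBigO.of_bound (C * C') ?_
  filter_upwards [tendsto_norm_cocompact_atTop.eventually_ge_atTop δ] with t ht
  have hpos : 0 < 1 + |t| := by positivity
  have hFt := hF t (by simpa using ht)
  have hβt : ‖β (σ + t * I)‖ ≤ C' * (1 + |t|) ^ (-(N + 2)) := by simpa using hβC' (σ + t * I)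
  calc ‖F (σ + t * I) * β (σ + t * I)‖
      ≤ C * (1 + |t|) ^ N * (C' * (1 + |t|) ^ (-(N + 2))) := by
        rw [norm_mul]
        exact mul_le_mul hFt hβt (norm_nonneg _) ((norm_nonneg _).trans hFt)
    _ = C * C' * (1 + |t|) ^ (-2 : ℝ) := by
        rw [mul_mul_mul_comm, ← Real.rpow_add hpos]; ring_nf
    _ = C * C' * ‖(1 + ‖t‖) ^ (-2 : ℝ)‖ := by
        rw [Real.norm_eq_abs t, Real.norm_of_nonneg (by positivity)]

lemma fourier_vertical_line_mul_gaussTestFun (F : ℂ → ℂ) (σ w : ℝ) :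
    𝓕 (fun t : ℝ => F (σ + t * I) * gaussTestFun σ 0 (σ + t * I)) w =
      ∫ t : ℝ, F (σ + t * I) * gaussTestFun σ (2 * Real.pi * w) (σ + t * I) := by
  rw [Real.fourier_real_eq_integral_exp_smul]
  congr with t
  rw [gaussTestFun_vertical_line σ (2 * Real.pi * w), smul_eq_mul, mul_left_comm]
  congr 4
  push_cast; ring

lemma eq_zero_on_vertical_line_of_integral_gaussTestFun_eq_zero {F G : ℂ → ℂ} {σ N C δ : ℝ}
    (hden : ∀ t : ℝ, (σ + t * I) * ((σ + t * I) ^ 2 - 1) ≠ 0)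
    (hG : Continuous fun t : ℝ => G (σ + t * I))
    (hFG : ∀ t : ℝ, F (σ + t * I) = G (σ + t * I) / ((σ + t * I) * ((σ + t * I) ^ 2 - 1)))
    (hF : ∀ t : ℝ, δ ≤ |t| → ‖F (σ + t * I)‖ ≤ C * (1 + |t|) ^ N)
    (hvanish : ∀ s : ℝ, ∫ t : ℝ, F (σ + t * I) * gaussTestFun σ s (σ + t * I) = 0) (t : ℝ) :
    G (σ + t * I) = 0 := by
  set g : ℝ → ℂ := fun t => F (σ + t * I) * gaussTestFun σ 0 (σ + t * I)
  have hg : g = fun t : ℝ => G (σ + t * I) *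
      (((σ + t * I) ^ 2 - 1) * exp ((σ + t * I) ^ 2 - (0 : ℝ) * (σ + t * I - σ))) :=
    funext fun t => by simp only [g]; rw [hFG t, div_mul_gaussTestFun σ 0 (hden t)]
  have hg_cont : Continuous g := hg ▸ hG.mul (by fun_prop)
  have hg_int : Integrable g :=
    integrable_vertical_line_mul (rapidDecayOnVerticalStrips_gaussTestFun σ 0) hg_cont hF
  have hg_fourier : 𝓕 g = 0 :=
    funext fun w => (fourier_vertical_line_mul_gaussTestFun F σ w).trans (hvanish _)
  have hgt := congrFun (hg_cont.eq_zero_of_fourier_eq_zero hg_int hg_fourier) t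
  rw [hg] at hgt
  exact (mul_eq_zero.1 hgt).resolve_right <|
    mul_ne_zero (right_ne_zero_of_mul (hden t)) (exp_ne_zero _)

theorem stmt_1_general (σ₁ σ₂ : ℝ) (F G : ℂ → ℂ)
    (hG : DifferentiableOn ℂ G {z : ℂ | σ₁ < z.re ∧ z.re < σ₂})
    (hFG : ∀ z : ℂ, σ₁ < z.re → z.re < σ₂ → z ≠ 0 → z ≠ 1 → z ≠ -1 →
      F z = G z / (z * (z ^ 2 - 1)))
    (hgrowth : ∀ a b : ℝ, σ₁ < a → b < σ₂ →
      ∃ N C δ : ℝ, 0 < δ ∧ ∀ z : ℂ, a ≤ z.re → z.re ≤ b → δ ≤ |z.im| →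
        ‖F z‖ ≤ C * (1 + |z.im|) ^ N)
    (σ : ℝ) (hσ₁ : σ₁ < σ) (hσ₂ : σ < σ₂) (hσ0 : σ ≠ 0) (hσp : σ ≠ 1) (hσm : σ ≠ -1)
    (hvanish : ∀ β : ℂ → ℂ, Differentiable ℂ β →
      β 0 = 0 → β 1 = 0 → β (-1) = 0 → deriv β 1 = 0 → deriv β (-1) = 0 →
      (∀ a b N : ℝ, ∃ C : ℝ, ∀ z : ℂ, a ≤ z.re → z.re ≤ b →
        ‖β z‖ ≤ C * (1 + |z.im|) ^ (-N)) →
      (∫ t : ℝ, F (σ + t * I) * β (σ + t * I)) = 0) :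
    ∀ z : ℂ, σ₁ < z.re → z.re < σ₂ → z ≠ 0 → z ≠ 1 → z ≠ -1 → F z = 0 := by
  set U := {z : ℂ | σ₁ < z.re ∧ z.re < σ₂}
  have hline (t : ℝ) : σ₁ < (σ + t * I : ℂ).re ∧ (σ + t * I : ℂ).re < σ₂ := by simp [hσ₁, hσ₂]
  have hℓ0 (t : ℝ) : (σ + t * I : ℂ) ≠ 0 := fun h => hσ0 (by simpa using congrArg re h)
  have hℓ1 (t : ℝ) : (σ + t * I : ℂ) ≠ 1 := fun h => hσp (by simpa using congrArg re h)
  have hℓm1 (t : ℝ) : (σ + t * I : ℂ) ≠ -1 := fun h => hσm (by simpa using congrArg re h)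
  obtain ⟨N, C, δ, -, hFδ⟩ := hgrowth σ σ hσ₁ hσ₂
  have hG_line : ∀ t : ℝ, G (σ + t * I) = 0 :=
    eq_zero_on_vertical_line_of_integral_gaussTestFun_eq_zero
      (fun t => mul_sq_sub_one_ne_zero (hℓ0 t) (hℓ1 t) (hℓm1 t))
      (hG.continuousOn.comp_continuous (by fun_prop) hline)
      (fun t => hFG _ (hline t).1 (hline t).2 (hℓ0 t) (hℓ1 t) (hℓm1 t))
      (fun t ht => by simpa using hFδ (σ + t * I) (by simp) (by simp) (by simpa using ht))
      fun s => hvanish _ (differentiable_gaussTestFun _ _) (gaussTestFun_eq_zero _ _ (by ring))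
        (gaussTestFun_eq_zero _ _ (by ring)) (gaussTestFun_eq_zero _ _ (by ring))
        (deriv_gaussTestFun_eq_zero _ _ (by ring)) (deriv_gaussTestFun_eq_zero _ _ (by ring))
        (rapidDecayOnVerticalStrips_gaussTestFun _ _)
  have hG_strip : Set.EqOn G 0 U :=
    eqOn_zero_of_eq_zero_on_vertical_line (isOpen_Ioo.preimage continuous_re)
      ((convex_halfSpace_re_gt σ₁).inter (convex_halfSpace_re_lt σ₂)).isPreconnected hG
      (show (σ : ℂ) ∈ U by simp [U, hσ₁, hσ₂]) hG_line
  intro z hz₁ hz₂ hz0 hz1 hzm1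
  rw [hFG z hz₁ hz₂ hz0 hz1 hzm1, hG_strip ⟨hz₁, hz₂⟩, Pi.zero_apply, zero_div]

/-- A meromorphic function `F` on a vertical strip `σ₁ < Re z < σ₂`
(written `F = G / (z (z²-1))` with `G` holomorphic, so the only possible poles are simple
ones at `z = 0, ±1`), vertically of moderate growth, which is annihilated by pairing against
every entire, vertically rapidly decreasing test function `β` with
`β(0) = β(±1) = β'(±1) = 0` along some vertical line `Re z = σ` (`σ ≠ 0, ±1`),
vanishes identically on the strip. -/
theorem stmt_1 (σ₁ σ₂ : ℝ) (hσ : σ₁ < σ₂) (F G : ℂ → ℂ)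
    (hG : DifferentiableOn ℂ G {z : ℂ | σ₁ < z.re ∧ z.re < σ₂})
    (hFG : ∀ z : ℂ, σ₁ < z.re → z.re < σ₂ → z ≠ 0 → z ≠ 1 → z ≠ -1 →
      F z = G z / (z * (z ^ 2 - 1)))
    (hgrowth : ∀ a b : ℝ, σ₁ < a → b < σ₂ →
      ∃ N C δ : ℝ, 0 < δ ∧ ∀ z : ℂ, a ≤ z.re → z.re ≤ b → δ ≤ |z.im| →
        ‖F z‖ ≤ C * (1 + |z.im|) ^ N)
    (σ : ℝ) (hσ₁ : σ₁ < σ) (hσ₂ : σ < σ₂) (hσ0 : σ ≠ 0) (hσp : σ ≠ 1) (hσm : σ ≠ -1)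
    (hvanish : ∀ β : ℂ → ℂ, Differentiable ℂ β →
      β 0 = 0 → β 1 = 0 → β (-1) = 0 → deriv β 1 = 0 → deriv β (-1) = 0 →
      (∀ a b N : ℝ, ∃ C : ℝ, ∀ z : ℂ, a ≤ z.re → z.re ≤ b →
        ‖β z‖ ≤ C * (1 + |z.im|) ^ (-N)) →
      (∫ t : ℝ, F (σ + t * I) * β (σ + t * I)) = 0) :
    ∀ z : ℂ, σ₁ < z.re → z.re < σ₂ → z ≠ 0 → z ≠ 1 → z ≠ -1 → F z = 0 :=
  stmt_1_general σ₁ σ₂ F G hG hFG hgrowth σ hσ₁ hσ₂ hσ0 hσp hσm hvanish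
end

section
/- For an even integer $l \geq 2$ and a complex number $w$ with $1 - l < \mathrm{Re}(w) < 1$, one has $\int_{\mathbb{R}} (1 - it/2)^{-l} |t|^{-w}\, dt = 2^{2-w} \sin(\pi w/2)\, B(1-w,\, l+w-1)$, where $B$ denotes the Euler beta function. Equivalently this equals $\Gamma_{\mathbb{R}}(1-w) \cdot 2^{2-2w}\pi^{1-w/2}\,\Gamma(l+w-1)/(\Gamma(w/2)\Gamma(l))$ with $\Gamma_{\mathbb{R}}(s) = \pi^{-s/2}\Gamma(s/2)$. -/
/-!
Split `ℝ` at `0`: on each half-line the integral is `∫₀^∞ (1 + cs)^(-l) s^(-w) ds` with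
`c = ∓i/2`. For `0 ≤ re c`, `c ≠ 0` this equals `c^(w-1) Γ(1-w) Γ(l+w-1) / Γ(l)`:
insert the regulator `e^(-εs)`, write `Γ(l) (1 + cs)^(-l) = ∫₀^∞ x^(l-1) e^(-(1+cs)x) dx`,
swap the integrals to get `Γ(1-w) ∫₀^∞ x^(l-1) e^(-x) (ε + cx)^(w-1) dx`, and let `ε → 0`
on both sides by dominated convergence. The formula `∫₀^∞ t^(a-1) e^(-bt) dt = Γ(a) b^(-a)`
for complex `b` follows from the real case by the identity theorem.
Then `(-i/2)^(w-1) + (i/2)^(w-1) = 2^(2-w) sin(πw/2)`, and the reflection and duplication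
formulas turn the Beta form into the `Γ_ℝ` form.
-/

open Complex MeasureTheory Set Filter Topology

lemma integrableOn_rpow_mul_exp_neg_mul {p r : ℝ} (hp : -1 < p) (hr : 0 < r) :
    IntegrableOn (fun t : ℝ => t ^ p * Real.exp (-(r * t))) (Ioi 0) := by
  simpa using integrableOn_rpow_mul_exp_neg_mul_rpow hp one_pos hr

lemma norm_ofReal_cpow_mul_exp_neg_mul {t : ℝ} (ht : 0 < t) (a b : ℂ) :
    ‖(t : ℂ) ^ a * exp (-(b * t))‖ = t ^ a.re * Real.exp (-(b.re * t)) := by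
  simp [norm_cpow_eq_rpow_re_of_pos ht, Complex.norm_exp, mul_re]

lemma aestronglyMeasurable_ofReal_cpow_mul_exp_neg_mul (a b : ℂ) (μ : Measure ℝ) :
    AEStronglyMeasurable (fun t : ℝ => (t : ℂ) ^ a * exp (-(b * t))) μ :=
  ((measurable_ofReal.pow_const a).mul
    (measurable_ofReal.const_mul b).neg.cexp).aestronglyMeasurable

lemma integrableOn_cpow_mul_exp_neg_mul {a b : ℂ} (ha : 0 < a.re) (hb : 0 < b.re) :
    IntegrableOn (fun t : ℝ => (t : ℂ) ^ (a - 1) * exp (-(b * t))) (Ioi 0) := by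
  refine (integrableOn_rpow_mul_exp_neg_mul (p := a.re - 1) (by linarith) hb).mono'
    (aestronglyMeasurable_ofReal_cpow_mul_exp_neg_mul _ _ _) ?_
  filter_upwards [ae_restrict_mem measurableSet_Ioi] with t ht
  rw [norm_ofReal_cpow_mul_exp_neg_mul ht, sub_re, one_re]

lemma differentiableAt_integral_cpow_mul_exp_neg_mul {a b : ℂ} (ha : 0 < a.re)
    (hb : 0 < b.re) :
    DifferentiableAt ℂ
      (fun b : ℂ => ∫ t in Ioi (0 : ℝ), (t : ℂ) ^ (a - 1) * exp (-(b * t))) b := by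
  have hε : 0 < b.re / 2 := by linarith
  refine (hasDerivAt_integral_of_dominated_loc_of_deriv_le
    (F := fun b (t : ℝ) => (t : ℂ) ^ (a - 1) * exp (-(b * t)))
    (F' := fun b (t : ℝ) => (t : ℂ) ^ (a - 1) * exp (-(b * t)) * -t)
    (bound := fun t => t ^ a.re * Real.exp (-(b.re / 2 * t)))
    (Metric.ball_mem_nhds b hε)
    (Eventually.of_forall fun _ => aestronglyMeasurable_ofReal_cpow_mul_exp_neg_mul _ _ _)
    (integrableOn_cpow_mul_exp_neg_mul ha hb)
    ((aestronglyMeasurable_ofReal_cpow_mul_exp_neg_mul _ _ _).mul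
      measurable_ofReal.neg.aestronglyMeasurable) ?_
    (integrableOn_rpow_mul_exp_neg_mul (by linarith) hε) ?_).2.differentiableAt
  · filter_upwards [ae_restrict_mem measurableSet_Ioi] with t (ht : 0 < t) z hz
    have hz_re : b.re / 2 ≤ z.re := by
      have := (abs_re_le_norm (z - b)).trans_lt (mem_ball_iff_norm.1 hz)
      rw [sub_re] at this
      linarith [neg_abs_le (z.re - b.re)]
    rw [norm_mul, norm_ofReal_cpow_mul_exp_neg_mul ht, norm_neg, norm_real,
      Real.norm_of_nonneg ht.le, sub_re, one_re, mul_right_comm,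
      ← Real.rpow_add_one ht.ne', sub_add_cancel]
    gcongr
  · filter_upwards with t z _
    have : HasDerivAt (fun z : ℂ => -(z * t)) (-t) z := by
      simpa using ((hasDerivAt_id z).mul_const (t : ℂ)).fun_neg
    simpa [mul_assoc] using this.cexp.const_mul ((t : ℂ) ^ (a - 1))

lemma integral_cpow_mul_exp_neg_mul_Ioi_of_re_pos {a b : ℂ} (ha : 0 < a.re) (hb : 0 < b.re) :
    ∫ t in Ioi (0 : ℝ), (t : ℂ) ^ (a - 1) * exp (-(b * t)) = Gamma a * b ^ (-a) := by
  let U : Set ℂ := {z | 0 < z.re}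
  have hU : IsOpen U := isOpen_lt continuous_const continuous_re
  have hlhs : AnalyticOnNhd ℂ
      (fun b : ℂ => ∫ t in Ioi (0 : ℝ), (t : ℂ) ^ (a - 1) * exp (-(b * t))) U :=
    DifferentiableOn.analyticOnNhd (fun z hz =>
      (differentiableAt_integral_cpow_mul_exp_neg_mul ha hz).differentiableWithinAt) hU
  have hrhs : AnalyticOnNhd ℂ (fun b : ℂ => Gamma a * b ^ (-a)) U :=
    DifferentiableOn.analyticOnNhd (fun z hz =>
      ((differentiableAt_id.cpow_const (Or.inl hz)).const_mul _).differentiableWithinAt) hU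
  have hreal : ∀ᶠ r : ℝ in 𝓝[>] 1,
      ∫ t in Ioi (0 : ℝ), (t : ℂ) ^ (a - 1) * exp (-((r : ℂ) * t))
        = Gamma a * (r : ℂ) ^ (-a) := by
    filter_upwards [self_mem_nhdsWithin] with r (hr : 1 < r)
    have hr0 : 0 < r := by linarith
    rw [integral_cpow_mul_exp_neg_mul_Ioi ha hr0, one_div, mul_comm,
      inv_cpow _ _ (by rw [arg_ofReal_of_nonneg hr0.le]; exact Real.pi_ne_zero.symm), cpow_neg]
  have hofReal : Tendsto (fun r : ℝ => (r : ℂ)) (𝓝[>] 1) (𝓝[≠] 1) := by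
    refine tendsto_nhdsWithin_iff.2 ⟨?_, ?_⟩
    · simpa using (continuous_ofReal.tendsto 1).mono_left nhdsWithin_le_nhds
    · filter_upwards [self_mem_nhdsWithin] with r (hr : 1 < r)
      simpa using hr.ne'
  exact hlhs.eqOn_of_preconnected_of_frequently_eq hrhs
    (convex_halfSpace_re_gt 0).isPreconnected (by simp [U]) (hofReal.frequently hreal.frequently)
    hb

section HalfLine

variable {c : ℂ}

lemma one_le_norm_one_add_mul (hc : 0 ≤ c.re) {s : ℝ} (hs : 0 ≤ s) : 1 ≤ ‖1 + c * s‖ :=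
  calc (1 : ℝ) ≤ (1 + c * s).re := by simpa [mul_re] using mul_nonneg hc hs
    _ ≤ ‖1 + c * s‖ := re_le_norm _

lemma norm_mul_le_norm_ofReal_add_mul (hc : 0 ≤ c.re) {ε x : ℝ} (hε : 0 ≤ ε)
    (hx : 0 ≤ x) : ‖c‖ * x ≤ ‖(ε : ℂ) + c * x‖ := by
  rw [← sq_le_sq₀ (by positivity) (norm_nonneg _), mul_pow, Complex.sq_norm, Complex.sq_norm,
    normSq_apply, normSq_apply]
  simp only [add_re, add_im, ofReal_re, ofReal_im, mul_re, mul_im]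
  nlinarith [mul_nonneg (mul_nonneg hε hc) hx, mul_nonneg hε hε]

lemma integrableOn_norm_one_add_mul_rpow_mul_rpow (hc : 0 ≤ c.re) (hc0 : c ≠ 0) {a b : ℝ}
    (hb : b < 1) (hab : 1 < a + b) :
    IntegrableOn (fun s : ℝ => ‖1 + c * s‖ ^ (-a) * s ^ (-b)) (Ioi 0) := by
  have hmeas : AEStronglyMeasurable (fun s : ℝ => ‖1 + c * s‖ ^ (-a) * s ^ (-b)) :=
    (((measurable_const.add (measurable_ofReal.const_mul c)).norm.pow_const _).mul
      (measurable_id.pow_const _)).aestronglyMeasurable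
  rw [← Ioc_union_Ioi_eq_Ioi zero_le_one]
  refine IntegrableOn.union ?_ ?_
  · have hint : IntegrableOn (fun s : ℝ => s ^ (-b)) (Ioc 0 1) :=
      (integrableOn_Ioc_iff_integrableOn_Ioo).2
        ((intervalIntegral.integrableOn_Ioo_rpow_iff one_pos).2 (by linarith))
    refine hint.mono' hmeas.restrict ?_
    filter_upwards [ae_restrict_mem measurableSet_Ioc] with s hs
    obtain ⟨hs, -⟩ := hs
    rw [Real.norm_of_nonneg (by positivity)]
    exact mul_le_of_le_one_left (by positivity)
      (Real.rpow_le_one_of_one_le_of_nonpos (one_le_norm_one_add_mul hc hs.le) (by linarith))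
  · refine ((integrableOn_Ioi_rpow_of_lt (by linarith : -a - b < -1) one_pos).const_mul
      (‖c‖ ^ (-a))).mono' hmeas.restrict ?_
    filter_upwards [ae_restrict_mem measurableSet_Ioi] with s (hs : 1 < s)
    have hs0 : 0 < s := by linarith
    have hcs : ‖c‖ * s ≤ ‖1 + c * s‖ := by
      simpa using norm_mul_le_norm_ofReal_add_mul hc zero_le_one hs0.le
    rw [Real.norm_of_nonneg (by positivity), sub_eq_add_neg, Real.rpow_add hs0, ← mul_assoc,
      ← Real.mul_rpow (norm_nonneg _) hs0.le]
    exact mul_le_mul_of_nonneg_right (Real.rpow_le_rpow_of_nonpos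
      (mul_pos (norm_pos_iff.2 hc0) hs0) hcs (by linarith)) (by positivity)

variable {l : ℕ} {w : ℂ}

lemma norm_one_add_mul_zpow_mul_cpow {s : ℝ} (hs : 0 < s) :
    ‖(1 + c * s) ^ (-(l : ℤ)) * (s : ℂ) ^ (-w)‖
      = ‖1 + c * s‖ ^ (-(l : ℝ)) * s ^ (-w.re) := by
  rw [norm_mul, norm_zpow, norm_cpow_eq_rpow_re_of_pos hs, ← Real.rpow_intCast, neg_re]
  push_cast
  rfl

lemma measurable_one_add_mul_zpow_mul_cpow :
    Measurable (fun s : ℝ => (1 + c * s) ^ (-(l : ℤ)) * (s : ℂ) ^ (-w)) :=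
  ((measurable_const.add (measurable_ofReal.const_mul c)).pow_const _).mul
    (measurable_ofReal.pow_const _)

lemma integrableOn_one_add_mul_zpow_mul_cpow (hc : 0 ≤ c.re) (hc0 : c ≠ 0)
    (hw1 : 1 - (l : ℝ) < w.re) (hw2 : w.re < 1) :
    IntegrableOn (fun s : ℝ => (1 + c * s) ^ (-(l : ℤ)) * (s : ℂ) ^ (-w)) (Ioi 0) := by
  refine (integrableOn_norm_one_add_mul_rpow_mul_rpow hc hc0 (a := l) hw2 (by linarith)).mono'
    measurable_one_add_mul_zpow_mul_cpow.aestronglyMeasurable ?_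
  filter_upwards [ae_restrict_mem measurableSet_Ioi] with s hs
  rw [norm_one_add_mul_zpow_mul_cpow hs]

end HalfLine

section Regularization

variable {c : ℂ} {l : ℕ} {w : ℂ} {e : ℝ}

lemma integrable_prod_cpow_mul_exp_mul_cpow_mul_exp (hc : 0 ≤ c.re) (hl : 0 < l)
    (hw : w.re < 1) (he : 0 < e) :
    Integrable (Function.uncurry fun (s x : ℝ) => (x : ℂ) ^ ((l : ℂ) - 1) *
        exp (-((1 + c * s) * x)) * ((s : ℂ) ^ (-w) * exp (-(e * s))))
      ((volume.restrict (Ioi 0)).prod (volume.restrict (Ioi 0))) := by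
  have hs_int : Integrable (fun s : ℝ => s ^ (-w.re) * Real.exp (-(e * s)))
      (volume.restrict (Ioi 0)) :=
    integrableOn_rpow_mul_exp_neg_mul (by linarith) he
  have hx_int : Integrable (fun x : ℝ => x ^ ((l : ℝ) - 1) * Real.exp (-(1 * x)))
      (volume.restrict (Ioi 0)) :=
    integrableOn_rpow_mul_exp_neg_mul (by simp [hl]) one_pos
  refine (hs_int.mul_prod hx_int).mono' ?_ ?_
  · have m1 : Measurable fun p : ℝ × ℝ => (p.1 : ℂ) := measurable_ofReal.comp measurable_fst
    have m2 : Measurable fun p : ℝ × ℝ => (p.2 : ℂ) := measurable_ofReal.comp measurable_snd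
    exact ((m2.pow_const _).mul ((measurable_const.add (m1.const_mul c)).mul m2).neg.cexp).mul
      ((m1.pow_const _).mul (m1.const_mul _).neg.cexp) |>.aestronglyMeasurable
  rw [Measure.prod_restrict]
  filter_upwards [ae_restrict_mem (measurableSet_Ioi.prod measurableSet_Ioi)] with p ⟨hs, hx⟩
  rw [mem_Ioi] at hs hx
  dsimp only [Function.uncurry]
  rw [norm_mul, norm_ofReal_cpow_mul_exp_neg_mul hx, norm_ofReal_cpow_mul_exp_neg_mul hs]
  have : -((1 + c * p.1).re * p.2) ≤ -(1 * p.2) := by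
    simp only [add_re, one_re, mul_re, ofReal_re, ofReal_im, mul_zero, sub_zero]
    nlinarith [mul_nonneg (mul_nonneg hc hs.le) hx.le]
  simp only [sub_re, natCast_re, one_re, neg_re, ofReal_re]
  rw [mul_comm (p.1 ^ _ * _)]
  gcongr

lemma Gamma_mul_integral_one_add_mul_zpow_mul_cpow_mul_exp (hc : 0 ≤ c.re) (hl : 0 < l)
    (hw : w.re < 1) (he : 0 < e) :
    Gamma l * ∫ s in Ioi (0 : ℝ), (1 + c * s) ^ (-(l : ℤ)) * (s : ℂ) ^ (-w) * exp (-(e * s))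
      = Gamma (1 - w) * ∫ x in Ioi (0 : ℝ),
          (x : ℂ) ^ ((l : ℂ) - 1) * exp (-(x : ℂ)) * (e + c * x) ^ (w - 1) := by
  have hl' : 0 < (l : ℂ).re := by simpa using hl
  have hw' : 0 < (1 - w).re := by simpa using hw
  have hx_int : ∀ s ∈ Ioi (0 : ℝ), ∫ x in Ioi (0 : ℝ),
      (x : ℂ) ^ ((l : ℂ) - 1) * exp (-((1 + c * s) * x)) * ((s : ℂ) ^ (-w) * exp (-(e * s)))
        = Gamma l * ((1 + c * s) ^ (-(l : ℤ)) * (s : ℂ) ^ (-w) * exp (-(e * s))) := by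
    intro s (hs : 0 < s)
    have hre : 0 < (1 + c * s).re := by
      simpa [mul_re] using add_pos_of_pos_of_nonneg one_pos (mul_nonneg hc hs.le)
    rw [integral_mul_const, integral_cpow_mul_exp_neg_mul_Ioi_of_re_pos hl' hre,
      show -(l : ℂ) = ((-(l : ℤ) : ℤ) : ℂ) by push_cast; ring, cpow_intCast]
    ring
  have hs_int : ∀ x ∈ Ioi (0 : ℝ), ∫ s in Ioi (0 : ℝ),
      (x : ℂ) ^ ((l : ℂ) - 1) * exp (-((1 + c * s) * x)) * ((s : ℂ) ^ (-w) * exp (-(e * s)))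
        = Gamma (1 - w) *
          ((x : ℂ) ^ ((l : ℂ) - 1) * exp (-(x : ℂ)) * (e + c * x) ^ (w - 1)) := by
    intro x (hx : 0 < x)
    have hre : 0 < ((e : ℂ) + c * x).re := by
      simpa [mul_re] using add_pos_of_pos_of_nonneg he (mul_nonneg hc hx.le)
    have hsplit : ∀ s : ℝ, (x : ℂ) ^ ((l : ℂ) - 1) * exp (-((1 + c * s) * x)) *
        ((s : ℂ) ^ (-w) * exp (-(e * s))) = (x : ℂ) ^ ((l : ℂ) - 1) * exp (-(x : ℂ)) *
          ((s : ℂ) ^ ((1 - w) - 1) * exp (-((e + c * x) * s))) := by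
      intro s
      rw [sub_sub_cancel_left, mul_mul_mul_comm, ← exp_add, mul_mul_mul_comm, ← exp_add]
      ring_nf
    simp_rw [hsplit]
    rw [integral_const_mul, integral_cpow_mul_exp_neg_mul_Ioi_of_re_pos hw' hre, neg_sub]
    ring
  calc Gamma l *
        ∫ s in Ioi (0 : ℝ), (1 + c * s) ^ (-(l : ℤ)) * (s : ℂ) ^ (-w) * exp (-(e * s))
      = ∫ s in Ioi (0 : ℝ), ∫ x in Ioi (0 : ℝ),
          (x : ℂ) ^ ((l : ℂ) - 1) * exp (-((1 + c * s) * x)) *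
            ((s : ℂ) ^ (-w) * exp (-(e * s))) := by
        rw [← integral_const_mul]
        exact setIntegral_congr_fun measurableSet_Ioi fun s hs => (hx_int s hs).symm
    _ = ∫ x in Ioi (0 : ℝ), ∫ s in Ioi (0 : ℝ),
          (x : ℂ) ^ ((l : ℂ) - 1) * exp (-((1 + c * s) * x)) *
            ((s : ℂ) ^ (-w) * exp (-(e * s))) :=
        integral_integral_swap (integrable_prod_cpow_mul_exp_mul_cpow_mul_exp hc hl hw he)
    _ = _ := by
        rw [← integral_const_mul]
        exact setIntegral_congr_fun measurableSet_Ioi hs_int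

end Regularization

lemma norm_cpow_le_of_re_nonneg {z : ℂ} (hz : 0 ≤ z.re) (y : ℂ) :
    ‖z ^ y‖ ≤ ‖z‖ ^ y.re * Real.exp (Real.pi / 2 * |y.im|) := by
  refine (norm_cpow_le z y).trans ?_
  rw [div_eq_mul_inv, ← Real.exp_neg]
  gcongr
  calc -(arg z * y.im) ≤ |arg z| * |y.im| := by rw [← abs_mul]; exact neg_le_abs _
    _ ≤ Real.pi / 2 * |y.im| := by gcongr; exact abs_arg_le_pi_div_two_iff.2 hz

lemma mul_ofReal_mem_slitPlane {c : ℂ} (hc : 0 ≤ c.re) (hc0 : c ≠ 0) {x : ℝ} (hx : 0 < x) :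
    c * x ∈ slitPlane := by
  rcases hc.lt_or_eq with hc | hc
  · exact Or.inl (by simpa [mul_re] using mul_pos hc hx)
  · refine Or.inr ?_
    have him : c.im ≠ 0 := fun h => hc0 (Complex.ext hc.symm h)
    simpa [mul_im] using mul_ne_zero him hx.ne'

lemma mul_ofReal_cpow_of_pos {c : ℂ} (hc0 : c ≠ 0) {x : ℝ} (hx : 0 < x) (y : ℂ) :
    (c * x) ^ y = c ^ y * (x : ℂ) ^ y := by
  have hx' : (x : ℂ) ≠ 0 := ofReal_ne_zero.2 hx.ne'
  rw [mul_comm c, cpow_def_of_ne_zero (mul_ne_zero hx' hc0), cpow_def_of_ne_zero hc0,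
    cpow_def_of_ne_zero hx', log_ofReal_mul hx hc0, ← exp_add, ← ofReal_log hx.le]
  ring_nf

section Limit

variable {c : ℂ} {l : ℕ} {w : ℂ}

lemma tendsto_integral_one_add_mul_zpow_mul_cpow_mul_exp (hc : 0 ≤ c.re) (hc0 : c ≠ 0)
    (hw1 : 1 - (l : ℝ) < w.re) (hw2 : w.re < 1) :
    Tendsto (fun e : ℝ => ∫ s in Ioi (0 : ℝ),
        (1 + c * s) ^ (-(l : ℤ)) * (s : ℂ) ^ (-w) * exp (-(e * s))) (𝓝[>] 0)
      (𝓝 (∫ s in Ioi (0 : ℝ), (1 + c * s) ^ (-(l : ℤ)) * (s : ℂ) ^ (-w))) := by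
  refine tendsto_integral_filter_of_dominated_convergence _
    (Eventually.of_forall fun e => (measurable_one_add_mul_zpow_mul_cpow.mul
      (measurable_ofReal.const_mul _).neg.cexp).aestronglyMeasurable) ?_
    (integrableOn_norm_one_add_mul_rpow_mul_rpow hc hc0 (a := l) hw2 (by linarith)) ?_
  · filter_upwards [self_mem_nhdsWithin] with e (he : 0 < e)
    filter_upwards [ae_restrict_mem measurableSet_Ioi] with s (hs : 0 < s)
    rw [norm_mul, norm_one_add_mul_zpow_mul_cpow hs]
    refine mul_le_of_le_one_right (by positivity) ?_
    rw [Complex.norm_exp, Real.exp_le_one_iff]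
    simpa [mul_re] using mul_nonneg he.le hs.le
  · filter_upwards with s
    have : Tendsto (fun e : ℝ => exp (-(e * s))) (𝓝[>] 0) (𝓝 1) := by
      simpa using ((continuous_ofReal.mul continuous_const).neg.cexp.tendsto 0).mono_left
        nhdsWithin_le_nhds
    simpa using this.const_mul ((1 + c * s) ^ (-(l : ℤ)) * (s : ℂ) ^ (-w))

lemma tendsto_integral_cpow_mul_exp_neg_mul_ofReal_add_mul_cpow (hc : 0 ≤ c.re) (hc0 : c ≠ 0)
    (hw1 : 1 - (l : ℝ) < w.re) (hw2 : w.re < 1) :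
    Tendsto (fun e : ℝ => ∫ x in Ioi (0 : ℝ),
        (x : ℂ) ^ ((l : ℂ) - 1) * exp (-(x : ℂ)) * (e + c * x) ^ (w - 1)) (𝓝[>] 0)
      (𝓝 (∫ x in Ioi (0 : ℝ),
        (x : ℂ) ^ ((l : ℂ) - 1) * exp (-(x : ℂ)) * (c * x) ^ (w - 1))) := by
  let C := ‖c‖ ^ (w.re - 1) * Real.exp (Real.pi / 2 * |w.im|)
  have hbound :
      IntegrableOn (fun x : ℝ => x ^ ((l : ℝ) + w.re - 2) * Real.exp (-x)) (Ioi 0) := by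
    simpa using integrableOn_rpow_mul_exp_neg_mul (r := 1) (by linarith) one_pos
  refine tendsto_integral_filter_of_dominated_convergence
    (fun x => C * (x ^ ((l : ℝ) + w.re - 2) * Real.exp (-x)))
    (Eventually.of_forall fun e => (((measurable_ofReal.pow_const _).mul
      measurable_ofReal.neg.cexp).mul
      ((measurable_const.add (measurable_ofReal.const_mul c)).pow_const _)).aestronglyMeasurable) ?_
    (hbound.const_mul C) ?_
  · filter_upwards [self_mem_nhdsWithin] with e (he : 0 < e)
    filter_upwards [ae_restrict_mem measurableSet_Ioi] with x (hx : 0 < x)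
    have hre : 0 ≤ ((e : ℂ) + c * x).re := by
      simpa [mul_re] using add_nonneg he.le (mul_nonneg hc hx.le)
    have hpow : ‖((e : ℂ) + c * x) ^ (w - 1)‖
        ≤ (‖c‖ * x) ^ (w.re - 1) * Real.exp (Real.pi / 2 * |w.im|) := by
      refine (norm_cpow_le_of_re_nonneg hre _).trans ?_
      simp only [sub_re, one_re, sub_im, one_im, sub_zero]
      gcongr ?_ * _
      exact Real.rpow_le_rpow_of_nonpos (mul_pos (norm_pos_iff.2 hc0) hx)
        (norm_mul_le_norm_ofReal_add_mul hc he.le hx.le) (by linarith)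
    rw [norm_mul, norm_mul, norm_cpow_eq_rpow_re_of_pos hx, Complex.norm_exp, neg_re, ofReal_re,
      sub_re, natCast_re, one_re]
    calc _ ≤ x ^ ((l : ℝ) - 1) * Real.exp (-x) *
          ((‖c‖ * x) ^ (w.re - 1) * Real.exp (Real.pi / 2 * |w.im|)) := by gcongr
      _ = C * (x ^ ((l : ℝ) + w.re - 2) * Real.exp (-x)) := by
        rw [Real.mul_rpow (norm_nonneg _) hx.le,
          show (l : ℝ) + w.re - 2 = (l - 1) + (w.re - 1) by ring, Real.rpow_add hx]
        ring
  · filter_upwards [ae_restrict_mem measurableSet_Ioi] with x (hx : 0 < x)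
    have hbase : Tendsto (fun e : ℝ => (e : ℂ) + c * x) (𝓝[>] 0) (𝓝 (c * x)) :=
      (Continuous.tendsto' (by fun_prop) 0 (c * x) (by simp)).mono_left nhdsWithin_le_nhds
    exact ((continuousAt_cpow_const (mul_ofReal_mem_slitPlane hc hc0 hx)).tendsto.comp
      hbase).const_mul _

end Limit

lemma integral_cpow_mul_exp_neg_mul_mul_ofReal_cpow {c : ℂ} (hc0 : c ≠ 0) {l : ℕ} {w : ℂ}
    (hw : 0 < ((l : ℂ) + w - 1).re) :
    ∫ x in Ioi (0 : ℝ), (x : ℂ) ^ ((l : ℂ) - 1) * exp (-(x : ℂ)) * (c * x) ^ (w - 1)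
      = c ^ (w - 1) * Gamma ((l : ℂ) + w - 1) := by
  rw [Gamma_eq_integral hw, GammaIntegral, ← integral_const_mul]
  refine setIntegral_congr_fun measurableSet_Ioi fun x (hx : 0 < x) => ?_
  have hx' : (x : ℂ) ≠ 0 := ofReal_ne_zero.2 hx.ne'
  rw [mul_ofReal_cpow_of_pos hc0 hx, show (l : ℂ) + w - 1 - 1 = ((l : ℂ) - 1) + (w - 1) by ring,
    cpow_add _ _ hx', ofReal_exp, ofReal_neg]
  ring

theorem integral_Ioi_one_add_mul_zpow_mul_cpow {c : ℂ} (hc : 0 ≤ c.re) (hc0 : c ≠ 0) {l : ℕ}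
    {w : ℂ} (hw1 : 1 - (l : ℝ) < w.re) (hw2 : w.re < 1) :
    ∫ s in Ioi (0 : ℝ), (1 + c * s) ^ (-(l : ℤ)) * (s : ℂ) ^ (-w)
      = c ^ (w - 1) * (Gamma (1 - w) * Gamma ((l : ℂ) + w - 1) / Gamma l) := by
  have hl : 0 < l := by exact_mod_cast (by linarith : (0 : ℝ) < l)
  have hΓ : Gamma l ≠ 0 := Gamma_ne_zero_of_re_pos (by simpa using hl)
  have hregular := (tendsto_integral_one_add_mul_zpow_mul_cpow_mul_exp hc hc0 hw1 hw2).const_mul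
    (Gamma l)
  have hswapped :=
    (tendsto_integral_cpow_mul_exp_neg_mul_ofReal_add_mul_cpow hc hc0 hw1 hw2).const_mul
      (Gamma (1 - w))
  have hlim := tendsto_nhds_unique (hregular.congr' (eventually_nhdsWithin_of_forall
    (s := Ioi 0) fun e he => Gamma_mul_integral_one_add_mul_zpow_mul_cpow_mul_exp hc hl hw2 he))
    hswapped
  rw [integral_cpow_mul_exp_neg_mul_mul_ofReal_cpow hc0 (by simp; linarith)] at hlim
  rw [mul_div_assoc', eq_div_iff hΓ, mul_comm, hlim]
  ring

lemma log_ofReal_inv_two_mul {z : ℂ} (hz : z ≠ 0) :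
    log ((2⁻¹ : ℝ) * z) = -log 2 + log z := by
  rw [log_ofReal_mul (by norm_num) hz, Real.log_inv, ofReal_neg, ofReal_log zero_le_two]
  push_cast
  rfl

lemma I_div_two_cpow (s : ℂ) : (I / 2) ^ s = 2 ^ (-s) * exp (s * ((Real.pi : ℂ) / 2 * I)) := by
  have h : I / 2 = ((2⁻¹ : ℝ) : ℂ) * I := by push_cast; ring
  rw [cpow_def_of_ne_zero (by simp), cpow_def_of_ne_zero two_ne_zero, h,
    log_ofReal_inv_two_mul I_ne_zero, log_I, ← exp_add]
  ring_nf

lemma neg_I_div_two_cpow (s : ℂ) :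
    (-(I / 2)) ^ s = 2 ^ (-s) * exp (-(s * ((Real.pi : ℂ) / 2 * I))) := by
  have h : -(I / 2) = ((2⁻¹ : ℝ) : ℂ) * -I := by push_cast; ring
  rw [cpow_def_of_ne_zero (by simp), cpow_def_of_ne_zero two_ne_zero, h,
    log_ofReal_inv_two_mul (neg_ne_zero.2 I_ne_zero), log_neg_I, ← exp_add]
  ring_nf

lemma neg_I_div_two_cpow_add_I_div_two_cpow (w : ℂ) :
    (-(I / 2)) ^ (w - 1) + (I / 2) ^ (w - 1) = 2 ^ (2 - w) * sin ((Real.pi : ℂ) * w / 2) := by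
  have h2 : (2 : ℂ) ^ (2 - w) = 2 ^ (-(w - 1)) * 2 := by
    rw [show (2 : ℂ) - w = -(w - 1) + 1 by ring, cpow_add _ _ two_ne_zero, cpow_one]
  rw [neg_I_div_two_cpow, I_div_two_cpow, h2, ← cos_sub_pi_div_two, cos]
  ring_nf

lemma two_cpow_mul_sin_mul_Gamma_one_sub {w : ℂ} (hw : w.re < 2) :
    2 ^ (2 - w) * sin ((Real.pi : ℂ) * w / 2) * Gamma (1 - w)
      = (Real.pi : ℂ) ^ (-(1 - w) / 2) * Gamma ((1 - w) / 2) * 2 ^ (2 - 2 * w) *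
          (Real.pi : ℂ) ^ (1 - w / 2) / Gamma (w / 2) := by
  by_cases hG : Gamma (w / 2) = 0
  · obtain ⟨m, hm⟩ := (Gamma_eq_zero_iff _).1 hG
    have hsin : sin ((Real.pi : ℂ) * w / 2) = 0 := by
      rw [show (Real.pi : ℂ) * w / 2 = ((-m : ℤ) : ℂ) * Real.pi by
        push_cast; linear_combination (Real.pi : ℂ) * hm]
      exact sin_int_mul_pi _
    simp [hsin, hG]
  have hG' : Gamma (1 - w / 2) ≠ 0 := Gamma_ne_zero_of_re_pos (by simp; linarith)
  have hreflection :
      Gamma (w / 2) * Gamma (1 - w / 2) * sin ((Real.pi : ℂ) * w / 2) = Real.pi := by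
    have h := Gamma_mul_Gamma_one_sub (w / 2)
    rw [mul_div_assoc'] at h
    rw [h, div_mul_cancel₀]
    rintro hsin
    rw [hsin, div_zero] at h
    exact mul_ne_zero hG hG' h
  have hduplication : Gamma ((1 - w) / 2) * Gamma (1 - w / 2)
      = Gamma (1 - w) * 2 ^ w * (√Real.pi : ℝ) := by
    have h := Gamma_mul_Gamma_add_half ((1 - w) / 2)
    rwa [show (1 - w) / 2 + 1 / 2 = 1 - w / 2 by ring, show 2 * ((1 - w) / 2) = 1 - w by ring,
      show (1 : ℂ) - (1 - w) = w by ring] at h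
  have hpi :
      (Real.pi : ℂ) ^ (-(1 - w) / 2) * (Real.pi : ℂ) ^ (1 - w / 2) = (√Real.pi : ℝ) := by
    rw [← cpow_add _ _ (ofReal_ne_zero.2 Real.pi_ne_zero), Real.sqrt_eq_rpow,
      ofReal_cpow Real.pi_pos.le]
    push_cast
    ring_nf
  have hsqrt : ((√Real.pi : ℝ) : ℂ) * (√Real.pi : ℝ) = Real.pi := by
    rw [← ofReal_mul, Real.mul_self_sqrt Real.pi_pos.le]
  have htwo : (2 : ℂ) ^ (2 - w) = 2 ^ (2 - 2 * w) * 2 ^ w := by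
    rw [← cpow_add _ _ two_ne_zero]
    ring_nf
  rw [eq_div_iff hG]
  refine mul_right_cancel₀ hG' ?_
  linear_combination 2 ^ (2 - w) * Gamma (1 - w) * hreflection
    - 2 ^ (2 - 2 * w) * Gamma ((1 - w) / 2) * Gamma (1 - w / 2) * hpi
    - (√Real.pi : ℝ) * 2 ^ (2 - 2 * w) * hduplication
    - 2 ^ (2 - 2 * w) * 2 ^ w * Gamma (1 - w) * hsqrt + Gamma (1 - w) * Real.pi * htwo

lemma integral_eq_integral_Ioi_comp_neg_add_integral_Ioi {E : Type*} [NormedAddCommGroup E]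
    [NormedSpace ℝ E] {f : ℝ → E} (hneg : IntegrableOn (fun x => f (-x)) (Ioi 0))
    (hpos : IntegrableOn f (Ioi 0)) :
    ∫ x, f x = (∫ x in Ioi 0, f (-x)) + ∫ x in Ioi 0, f x := by
  have hIic : IntegrableOn f (Iic 0) := by
    rw [integrableOn_Iic_iff_integrableOn_Iio]
    simpa [Function.comp_def] using
      ((Measure.measurePreserving_neg volume).integrableOn_comp_preimage
        (Homeomorph.neg ℝ).measurableEmbedding).2 hneg
  rw [← intervalIntegral.integral_Iic_add_Ioi hIic hpos, ← neg_zero, ← integral_comp_neg_Ioi,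
    neg_zero]

lemma integral_one_sub_I_mul_div_two_zpow_mul_abs_cpow {l : ℕ} {w : ℂ}
    (hw1 : 1 - (l : ℝ) < w.re) (hw2 : w.re < 1) :
    ∫ t : ℝ, (1 - I * (t : ℂ) / 2) ^ (-(l : ℤ)) * ((|t| : ℝ) : ℂ) ^ (-w)
      = 2 ^ (2 - w) * sin ((Real.pi : ℂ) * w / 2) *
          (Gamma (1 - w) * Gamma ((l : ℂ) + w - 1) / Gamma l) := by
  have hpos :
      EqOn (fun t : ℝ => (1 - I * (t : ℂ) / 2) ^ (-(l : ℤ)) * ((|t| : ℝ) : ℂ) ^ (-w))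
      (fun s : ℝ => (1 + -(I / 2) * s) ^ (-(l : ℤ)) * (s : ℂ) ^ (-w)) (Ioi 0) := by
    intro s (hs : 0 < s)
    simp only [abs_of_pos hs]
    ring_nf
  have hneg :
      EqOn
        (fun t : ℝ => (1 - I * ((-t : ℝ) : ℂ) / 2) ^ (-(l : ℤ)) * ((|-t| : ℝ) : ℂ) ^ (-w))
      (fun s : ℝ => (1 + I / 2 * s) ^ (-(l : ℤ)) * (s : ℂ) ^ (-w)) (Ioi 0) := by
    intro s (hs : 0 < s)
    simp only [abs_neg, abs_of_pos hs]
    push_cast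
    ring_nf
  have hint (c : ℂ) (hc : c.re = 0) (hc0 : c ≠ 0) :
      IntegrableOn (fun s : ℝ => (1 + c * s) ^ (-(l : ℤ)) * (s : ℂ) ^ (-w)) (Ioi 0) :=
    integrableOn_one_add_mul_zpow_mul_cpow hc.ge hc0 hw1 hw2
  rw [integral_eq_integral_Ioi_comp_neg_add_integral_Ioi
      ((hint _ (by simp) (by simp)).congr_fun hneg.symm measurableSet_Ioi)
      ((hint _ (by simp) (by simp)).congr_fun hpos.symm measurableSet_Ioi),
    setIntegral_congr_fun measurableSet_Ioi hneg, setIntegral_congr_fun measurableSet_Ioi hpos,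
    integral_Ioi_one_add_mul_zpow_mul_cpow (by simp) (by simp) hw1 hw2,
    integral_Ioi_one_add_mul_zpow_mul_cpow (by simp) (by simp) hw1 hw2,
    ← add_mul, add_comm, neg_I_div_two_cpow_add_I_div_two_cpow]

theorem stmt_2_general (l : ℕ) (w : ℂ)
    (hw1 : 1 - (l : ℝ) < w.re) (hw2 : w.re < 1) :
    (∫ t : ℝ, (1 - I * (t : ℂ) / 2) ^ (-(l : ℤ)) * ((|t| : ℝ) : ℂ) ^ (-w)) =
        (2 : ℂ) ^ ((2 : ℂ) - w) * Complex.sin ((Real.pi : ℂ) * w / 2) *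
          (Complex.Gamma (1 - w) * Complex.Gamma ((l : ℂ) + w - 1) /
            Complex.Gamma ((1 - w) + ((l : ℂ) + w - 1))) ∧
      (∫ t : ℝ, (1 - I * (t : ℂ) / 2) ^ (-(l : ℤ)) * ((|t| : ℝ) : ℂ) ^ (-w)) =
        ((Real.pi : ℂ) ^ (-(1 - w) / 2) * Complex.Gamma ((1 - w) / 2)) *
          (2 : ℂ) ^ ((2 : ℂ) - 2 * w) * (Real.pi : ℂ) ^ ((1 : ℂ) - w / 2) *
          Complex.Gamma ((l : ℂ) + w - 1) /
            (Complex.Gamma (w / 2) * Complex.Gamma (l : ℂ)) := by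
  have hbeta := integral_one_sub_I_mul_div_two_zpow_mul_abs_cpow hw1 hw2
  rw [show (1 - w) + ((l : ℂ) + w - 1) = l by ring]
  refine ⟨hbeta, hbeta.trans ?_⟩
  rw [mul_div_assoc', ← mul_assoc, two_cpow_mul_sin_mul_Gamma_one_sub (by linarith)]
  ring

/-- For an even integer `l ≥ 2` and `1 - l < Re w < 1`,
`∫ℝ (1 - it/2)^{-l} |t|^{-w} dt = 2^{2-w} sin(πw/2) B(1-w, l+w-1)`, where
`B(x,y) = Γ(x)Γ(y)/Γ(x+y)`; equivalently it equals
`Γ_ℝ(1-w) · 2^{2-2w} π^{1-w/2} Γ(l+w-1)/(Γ(w/2)Γ(l))` with `Γ_ℝ(s) = π^{-s/2}Γ(s/2)`. -/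
theorem stmt_2 (l : ℕ) (hl : Even l) (hl2 : 2 ≤ l) (w : ℂ)
    (hw1 : 1 - (l : ℝ) < w.re) (hw2 : w.re < 1) :
    (∫ t : ℝ, (1 - I * (t : ℂ) / 2) ^ (-(l : ℤ)) * ((|t| : ℝ) : ℂ) ^ (-w)) =
        (2 : ℂ) ^ ((2 : ℂ) - w) * Complex.sin ((Real.pi : ℂ) * w / 2) *
          (Complex.Gamma (1 - w) * Complex.Gamma ((l : ℂ) + w - 1) /
            Complex.Gamma ((1 - w) + ((l : ℂ) + w - 1))) ∧
      (∫ t : ℝ, (1 - I * (t : ℂ) / 2) ^ (-(l : ℤ)) * ((|t| : ℝ) : ℂ) ^ (-w)) =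
        ((Real.pi : ℂ) ^ (-(1 - w) / 2) * Complex.Gamma ((1 - w) / 2)) *
          (2 : ℂ) ^ ((2 : ℂ) - 2 * w) * (Real.pi : ℂ) ^ ((1 : ℂ) - w / 2) *
          Complex.Gamma ((l : ℂ) + w - 1) /
            (Complex.Gamma (w / 2) * Complex.Gamma (l : ℂ)) :=
  stmt_2_general l w hw1 hw2
end

section
/- Let $q > 1$, $z \in \mathbb{C}$, and $\alpha \geq 1$ an integer. Set $t = q^{z/2}$ and define $f(t) = \frac{1 - q^{-1/2}t}{1 - t^2} t^{-\alpha} + \frac{1 - q^{-1/2}t^{-1}}{1 - t^{-2}} t^{\alpha}$. Then $f$ extends holomorphically to $t \in \mathbb{C} \setminus \{0\}$, satisfies $f(t^{-1}) = f(t)$, and $|f(t)| \leq 3\alpha \max(|t|, |t|^{-1})^{\alpha}$ for all $t \neq 0$. -/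
open Complex

/-- The regularized expression for the function of Statement 4:
`f(t) = t^α (1 + g(t) t^{-2α} (1 - t q^{-1/2}))` with `g(t) = ∑_{j<α} t^{2j}`. -/
noncomputable def f4 (q : ℝ) (α : ℕ) (t : ℂ) : ℂ :=
  t ^ (α : ℤ) * (1 + (∑ j ∈ Finset.range α, t ^ (2 * j)) * t ^ (-(2 * (α : ℤ))) *
    (1 - t * (((Real.sqrt q)⁻¹ : ℝ) : ℂ)))

lemma f4_eq (q : ℝ) (α : ℕ) (t : ℂ) (ht : t ≠ 0) :
    f4 q α t = (t ^ (2*α) + (∑ j ∈ Finset.range α, t ^ (2 * j)) *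
      (1 - t * (((Real.sqrt q)⁻¹ : ℝ) : ℂ))) / t ^ α := by
  unfold f4
  rw [show (-(2 * (α:ℤ))) = (-((2*α : ℕ) : ℤ)) by push_cast; ring, zpow_neg, zpow_natCast,
    zpow_natCast]
  field_simp
  ring

lemma sum_eq_aux (α : ℕ) (t : ℂ) (h : t ^ 2 ≠ 1) :
    ∑ j ∈ Finset.range α, t ^ (2 * j) = ((t ^ α) ^ 2 - 1) / (t ^ 2 - 1) := by
  have h1 := geom_sum_eq h α
  have h2 : ∀ j, (t^2)^j = t^(2*j) := fun j => (pow_mul t 2 j).symm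
  simp only [h2] at h1
  rw [h1, ← pow_mul, mul_comm α 2, pow_mul]

lemma f4_eq' (q : ℝ) (α : ℕ) (t : ℂ) (ht : t ≠ 0) (h : t ^ 2 ≠ 1) :
    f4 q α t = ((t^α)^2 * (t^2 - 1) + ((t^α)^2 - 1) * (1 - t * (((Real.sqrt q)⁻¹ : ℝ) : ℂ))) /
      (t^α * (t^2 - 1)) := by
  rw [f4_eq _ _ _ ht, sum_eq_aux _ _ h]
  have h2 : t ^ 2 - 1 ≠ 0 := sub_ne_zero.mpr h
  have hu : t ^ α ≠ 0 := pow_ne_zero _ ht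
  rw [show 2*α = α + α from two_mul α, pow_add, ← sq]
  field_simp
  try ring
  try exact Or.inl trivial

lemma f4_inv (q : ℝ) (α : ℕ) (t : ℂ) (ht : t ≠ 0) : f4 q α t⁻¹ = f4 q α t := by
  by_cases h : t ^ 2 = 1
  · rw [inv_eq_of_mul_eq_one_left (by rw [← sq]; exact h)]
  · have ht' : t⁻¹ ≠ 0 := inv_ne_zero ht
    have h' : (t⁻¹) ^ 2 ≠ 1 := by
      rw [inv_pow]; intro hc; exact h (by rwa [inv_eq_one] at hc)
    rw [f4_eq' _ _ _ ht h, f4_eq' _ _ _ ht' h']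
    simp only [inv_pow]
    have hu : t ^ α ≠ 0 := pow_ne_zero _ ht
    have h2 : t ^ 2 - 1 ≠ 0 := sub_ne_zero.mpr h
    have h2' : (t^2)⁻¹ - 1 ≠ 0 := by
      rw [sub_ne_zero]; intro hc; apply h; rw [← inv_inv (t^2), hc, inv_one]
    have h3 : 1 - t ^ 2 ≠ 0 := sub_ne_zero.mpr fun hc => h hc.symm
    generalize t ^ α = u at hu ⊢
    rw [div_eq_div_iff (mul_ne_zero (inv_ne_zero hu) h2') (mul_ne_zero hu h2)]
    field_simp
    try ring

lemma f4_bound (q : ℝ) (hq : 1 < q) (α : ℕ) (hα : 1 ≤ α) (t : ℂ) (ht1 : 1 ≤ ‖t‖) :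
    ‖f4 q α t‖ ≤ 3 * α * ‖t‖ ^ α := by
  have hr0 : (0:ℝ) < ‖t‖ := lt_of_lt_of_le one_pos ht1
  have ht : t ≠ 0 := by intro h; rw [h] at ht1; simp at ht1; linarith
  set r := ‖t‖ with hr
  have hc : ‖(((Real.sqrt q)⁻¹ : ℝ) : ℂ)‖ ≤ 1 := by
    rw [Complex.norm_real, Real.norm_eq_abs, abs_inv, _root_.abs_of_nonneg (Real.sqrt_nonneg q)]
    have h1 : 1 ≤ Real.sqrt q := by
      nlinarith [Real.sq_sqrt (le_of_lt (lt_trans one_pos hq)), Real.sqrt_nonneg q]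
    exact inv_le_one_of_one_le₀ h1
  have hG : ‖∑ j ∈ Finset.range α, t ^ (2*j)‖ ≤ (α:ℝ) * r ^ (2*(α-1)) := by
    calc ‖∑ j ∈ Finset.range α, t ^ (2*j)‖ ≤ ∑ j ∈ Finset.range α, ‖t ^ (2*j)‖ :=
          norm_sum_le _ _
      _ ≤ ∑ _j ∈ Finset.range α, r ^ (2*(α-1)) := by
          refine Finset.sum_le_sum fun j hj => ?_
          rw [norm_pow]
          exact pow_le_pow_right₀ ht1 (by have := Finset.mem_range.mp hj; omega)
      _ = (α:ℝ) * r ^ (2*(α-1)) := by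
          rw [Finset.sum_const, Finset.card_range, nsmul_eq_mul]
  have hlin : ‖1 - t * (((Real.sqrt q)⁻¹ : ℝ) : ℂ)‖ ≤ 2 * r := by
    calc ‖1 - t * (((Real.sqrt q)⁻¹ : ℝ) : ℂ)‖
        ≤ ‖(1:ℂ)‖ + ‖t * (((Real.sqrt q)⁻¹ : ℝ) : ℂ)‖ := norm_sub_le _ _
      _ = 1 + r * ‖(((Real.sqrt q)⁻¹ : ℝ) : ℂ)‖ := by rw [norm_one, norm_mul]
      _ ≤ 2 * r := by nlinarith [norm_nonneg (((Real.sqrt q)⁻¹ : ℝ) : ℂ)]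
  have key : r ^ (2*(α-1)) * r ^ (-(2*(α:ℤ))) * r ≤ 1 := by
    have hcast : ((2*(α-1):ℕ):ℤ) = 2*(α:ℤ) - 2 := by omega
    have e : r ^ (2*(α-1)) * r ^ (-(2*(α:ℤ))) * r = r ^ (-1 : ℤ) := by
      calc r ^ (2*(α-1)) * r ^ (-(2*(α:ℤ))) * r
          = r ^ ((2*(α-1):ℕ):ℤ) * r ^ (-(2*(α:ℤ))) * r ^ (1:ℤ) := by
            rw [zpow_natCast, zpow_one]
        _ = r ^ (((2*(α-1):ℕ):ℤ) + -(2*(α:ℤ)) + 1) := by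
            rw [← zpow_add₀ hr0.ne', ← zpow_add₀ hr0.ne']
        _ = r ^ (-1:ℤ) := by rw [hcast]; congr 1; ring
    rw [e, zpow_neg_one]
    exact inv_le_one_of_one_le₀ ht1
  have hP0 : 0 ≤ r ^ (2*(α-1)) * r ^ (-(2*(α:ℤ))) * r :=
    mul_nonneg (mul_nonneg (pow_nonneg hr0.le _) (zpow_nonneg hr0.le _)) hr0.le
  have e1 : ‖f4 q α t‖ ≤ r^α * (1 + ((α:ℝ) * r^(2*(α-1))) * r^(-(2*(α:ℤ))) * (2*r)) := by
    unfold f4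
    rw [norm_mul, norm_zpow, zpow_natCast]
    refine mul_le_mul_of_nonneg_left ?_ (pow_nonneg hr0.le α)
    calc ‖1 + (∑ j ∈ Finset.range α, t ^ (2 * j)) * t ^ (-(2 * (α : ℤ))) *
          (1 - t * (((Real.sqrt q)⁻¹ : ℝ) : ℂ))‖
        ≤ 1 + ‖∑ j ∈ Finset.range α, t ^ (2 * j)‖ * r ^ (-(2 * (α : ℤ))) *
          ‖1 - t * (((Real.sqrt q)⁻¹ : ℝ) : ℂ)‖ := by
          simpa [norm_mul, norm_zpow] using norm_add_le (1:ℂ)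
            ((∑ j ∈ Finset.range α, t ^ (2 * j)) * t ^ (-(2 * (α : ℤ))) *
              (1 - t * (((Real.sqrt q)⁻¹ : ℝ) : ℂ)))
      _ ≤ 1 + ((α:ℝ) * r^(2*(α-1))) * r^(-(2*(α:ℤ))) * (2*r) := by
          gcongr
          try exact zpow_nonneg hr0.le _
  have hx : (0:ℝ) ≤ r ^ α := pow_nonneg hr0.le α
  have hα1 : (1:ℝ) ≤ (α:ℝ) := by exact_mod_cast hα
  calc ‖f4 q α t‖ ≤ r^α * (1 + ((α:ℝ) * r^(2*(α-1))) * r^(-(2*(α:ℤ))) * (2*r)) := e1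
    _ = r^α + 2 * (α:ℝ) * (r^(2*(α-1)) * r^(-(2*(α:ℤ))) * r) * r^α := by ring
    _ ≤ 3 * α * r ^ α := by
        nlinarith [mul_nonneg (mul_nonneg (by linarith : (0:ℝ) ≤ (α:ℝ))
            (sub_nonneg.mpr key)) hx,
          mul_nonneg (sub_nonneg.mpr hα1) hx]

/-- For `q > 1` and an integer `α ≥ 1`, the function
`f(t) = (1-q^{-1/2}t)/(1-t²) t^{-α} + (1-q^{-1/2}t^{-1})/(1-t^{-2}) t^{α}`
extends holomorphically to `ℂ \ {0}`, satisfies `f(t⁻¹) = f(t)`, and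
`|f(t)| ≤ 3α max(|t|,|t|⁻¹)^α`. -/
theorem stmt_4 (q : ℝ) (hq : 1 < q) (α : ℕ) (hα : 1 ≤ α) :
    (∀ t : ℂ, t ≠ 0 → DifferentiableAt ℂ (f4 q α) t) ∧
    (∀ t : ℂ, t ≠ 0 → t ^ 2 ≠ 1 →
      f4 q α t = (1 - (((Real.sqrt q)⁻¹ : ℝ) : ℂ) * t) / (1 - t ^ 2) * t ^ (-(α : ℤ)) +
        (1 - (((Real.sqrt q)⁻¹ : ℝ) : ℂ) * t⁻¹) / (1 - (t⁻¹) ^ 2) * t ^ (α : ℤ)) ∧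
    (∀ t : ℂ, t ≠ 0 → f4 q α t⁻¹ = f4 q α t) ∧
    (∀ t : ℂ, t ≠ 0 → ‖f4 q α t‖ ≤ 3 * α * (max ‖t‖ ‖t‖⁻¹) ^ α) := by
  refine ⟨?_, ?_, fun t ht => f4_inv q α t ht, ?_⟩
  · intro t ht
    show DifferentiableAt ℂ (fun s : ℂ => s ^ (α : ℤ) *
      (1 + (∑ j ∈ Finset.range α, s ^ (2 * j)) * s ^ (-(2 * (α : ℤ))) *
        (1 - s * (((Real.sqrt q)⁻¹ : ℝ) : ℂ)))) t
    have h1 : DifferentiableAt ℂ (fun s : ℂ => s ^ (α:ℤ)) t :=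
      differentiableAt_zpow.mpr (Or.inl ht)
    have h2 : DifferentiableAt ℂ (fun s : ℂ => s ^ (-(2*(α:ℤ)))) t :=
      differentiableAt_zpow.mpr (Or.inl ht)
    have h3 : DifferentiableAt ℂ (fun s : ℂ => ∑ j ∈ Finset.range α, s ^ (2*j)) t :=
      DifferentiableAt.fun_sum fun j _ => differentiableAt_pow _
    have h4 : DifferentiableAt ℂ (fun s : ℂ => 1 - s * (((Real.sqrt q)⁻¹ : ℝ) : ℂ)) t :=
      (differentiableAt_const _).sub (differentiableAt_id.mul_const _)
    exact h1.mul (((h3.mul h2).mul h4).const_add 1)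
  · intro t ht h2
    rw [f4_eq' q α t ht h2, zpow_neg, zpow_natCast]
    have hu : t ^ α ≠ 0 := pow_ne_zero _ ht
    have hA : 1 - t ^ 2 ≠ 0 := sub_ne_zero.mpr fun hc => h2 hc.symm
    have hB : 1 - (t⁻¹) ^ 2 ≠ 0 := by
      rw [inv_pow, sub_ne_zero]
      intro hc; apply h2; rw [← inv_inv (t^2), ← hc, inv_one]
    rw [inv_pow] at hB ⊢
    have h2' : t ^ 2 - 1 ≠ 0 := sub_ne_zero.mpr h2
    generalize t ^ α = u at hu ⊢
    field_simp
    try ring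
  · intro t ht
    rcases le_total 1 ‖t‖ with h1 | h1
    · rw [max_eq_left (le_trans (inv_le_one_of_one_le₀ h1) h1)]
      exact f4_bound q hq α hα t h1
    · have hpos : 0 < ‖t‖ := norm_pos_iff.mpr ht
      have h2 : 1 ≤ ‖t⁻¹‖ := by
        rw [norm_inv]; exact (one_le_inv₀ hpos).mpr h1
      rw [max_eq_right (le_trans h1 (by rw [← norm_inv]; exact h2)),
        ← f4_inv q α t ht]
      have := f4_bound q hq α hα t⁻¹ h2
      rwa [norm_inv] at this
end

section
/- Let $q \geq 2$, $z \in \mathbb{C}$, $t = q^{z/2}$, and integer $\alpha \geq 1$. Define $f(t) = \frac{1 - q^{-1/2}t}{1-t^2}(1 + q^{1/2}t)t^{-\alpha} + \frac{1 - q^{-1/2}t^{-1}}{1-t^{-2}}(1 + q^{1/2}t^{-1})t^{\alpha}$. Then $f$ is holomorphic on $\mathbb{C}^\times$, satisfies $f(t) = f(t^{-1})$, and $|f(t)| \leq 4(\alpha+1)(1+q^{1/2}) \max(|t|,|t|^{-1})^{\alpha}$. -/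
/-!
Write `α = β + 1`, `s = √q` and `g(t) = ∑_{j<β} t^{2j}`, so that
`f5 t = t^α (1 + t⁻² + t⁻¹(s - s⁻¹)) + t^{-α} g(t) (1 - s⁻¹t)(1 + st)`.
The geometric sum identity `g(t)(t² - 1) = t^{2β} - 1` turns this into the rational expression,
which is visibly invariant under `t ↦ t⁻¹`; at `t = ±1` the invariance is trivial since then
`t⁻¹ = t`. For `|t| ≥ 1` both summands are `O(|t|^α)`, using `|g(t)| ≤ β|t|^{2β}`, and the case
`|t| ≤ 1` follows by the symmetry.
-/

open Complex

/-- The regularized expression for the function of Statement 5: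
`f(t) = t^α (1 + t^{-2} + t^{-1}(q^{1/2}-q^{-1/2}) + t^{-2α} g(t)(1-q^{-1/2}t)(1+q^{1/2}t))`
with `g(t) = ∑_{j ≤ α-2} t^{2j}` (empty for `α = 1`). -/
noncomputable def f5 (q : ℝ) (α : ℕ) (t : ℂ) : ℂ :=
  t ^ (α : ℤ) * (1 + t ^ (-2 : ℤ) +
    t ^ (-1 : ℤ) * (((Real.sqrt q : ℝ) : ℂ) - (((Real.sqrt q)⁻¹ : ℝ) : ℂ)) +
    t ^ (-(2 * (α : ℤ))) * (∑ j ∈ Finset.range (α - 1), t ^ (2 * j)) *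
      (1 - (((Real.sqrt q)⁻¹ : ℝ) : ℂ) * t) * (1 + ((Real.sqrt q : ℝ) : ℂ) * t))

open Finset

theorem norm_sum_range_pow_le {R : Type*} [SeminormedRing R] [NormOneClass R] {x : R}
    (hx : 1 ≤ ‖x‖) (n : ℕ) : ‖∑ j ∈ range n, x ^ j‖ ≤ n * ‖x‖ ^ n := by
  refine (norm_sum_le _ _).trans ?_
  simpa using sum_le_card_nsmul (range n) _ _ fun j hj =>
    (norm_pow_le x j).trans (pow_le_pow_right₀ hx (mem_range.mp hj).le)

theorem norm_one_add_mul_le {R : Type*} [SeminormedRing R] [NormOneClass R] {t : R}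
    (ht : 1 ≤ ‖t‖) (c : R) : ‖1 + c * t‖ ≤ (1 + ‖c‖) * ‖t‖ :=
  calc ‖1 + c * t‖ ≤ ‖(1 : R)‖ + ‖c‖ * ‖t‖ :=
        (norm_add_le _ _).trans (by gcongr; exact norm_mul_le c t)
    _ = 1 + ‖c‖ * ‖t‖ := by rw [norm_one]
    _ ≤ (1 + ‖c‖) * ‖t‖ := by nlinarith [norm_nonneg c]

theorem differentiableAt_f5 (q : ℝ) (α : ℕ) {t : ℂ} (ht : t ≠ 0) :
    DifferentiableAt ℂ (f5 q α) t := by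
  unfold f5
  fun_prop (disch := simp [ht])

theorem f5_succ_eq (q : ℝ) (β : ℕ) {t : ℂ} (ht : t ≠ 0) :
    f5 q (β + 1) t = t ^ (β + 1) * (1 + (t ^ 2)⁻¹ + t⁻¹ * (√q - (((√q)⁻¹ : ℝ) : ℂ))) +
      (t ^ (β + 1))⁻¹ * (∑ j ∈ range β, (t ^ 2) ^ j) *
        ((1 - (((√q)⁻¹ : ℝ) : ℂ) * t) * (1 + √q * t)) := by
  have h2 : t ^ (-(2 * ((β + 1 : ℕ) : ℤ))) = (t ^ (β + 1))⁻¹ * (t ^ (β + 1))⁻¹ := by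
    rw [zpow_neg, ← mul_inv, ← sq, ← pow_mul, mul_comm]
    norm_cast
  rw [f5, h2]
  simp only [Nat.add_sub_cancel, zpow_natCast, zpow_neg, ofReal_inv, pow_mul]
  field_simp

theorem f5_succ_eq_rational (q : ℝ) (hq : 0 < q) (β : ℕ) {t : ℂ} (ht : t ≠ 0)
    (ht2 : t ^ 2 ≠ 1) :
    f5 q (β + 1) t = (1 - (((√q)⁻¹ : ℝ) : ℂ) * t) / (1 - t ^ 2) *
          (1 + (√q : ℂ) * t) * t ^ (-((β + 1 : ℕ) : ℤ)) +
        (1 - (((√q)⁻¹ : ℝ) : ℂ) * t⁻¹) / (1 - t⁻¹ ^ 2) *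
          (1 + (√q : ℂ) * t⁻¹) * t ^ ((β + 1 : ℕ) : ℤ) := by
  have hs : (√q : ℂ) ≠ 0 := ofReal_ne_zero.mpr (Real.sqrt_pos.mpr hq).ne'
  have h1 : t ^ 2 - 1 ≠ 0 := sub_ne_zero.mpr ht2
  have hg : ∑ j ∈ range β, (t ^ 2) ^ j = ((t ^ 2) ^ β - 1) / (t ^ 2 - 1) :=
    eq_div_of_mul_eq h1 (geom_sum_mul _ _)
  rw [f5_succ_eq q β ht, hg, zpow_neg, zpow_natCast]
  push_cast
  field_simp
  ring

theorem f5_succ_inv (q : ℝ) (hq : 0 < q) (β : ℕ) {t : ℂ} (ht : t ≠ 0) :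
    f5 q (β + 1) t⁻¹ = f5 q (β + 1) t := by
  by_cases ht2 : t ^ 2 = 1
  · rw [inv_eq_of_mul_eq_one_right (by rwa [← sq])]
  have ht2' : t⁻¹ ^ 2 ≠ 1 := by rwa [inv_pow, inv_ne_one]
  rw [f5_succ_eq_rational q hq β ht ht2, f5_succ_eq_rational q hq β (inv_ne_zero ht) ht2',
    inv_inv, inv_zpow', neg_neg, inv_zpow', add_comm]

theorem norm_f5_succ_le_of_one_le_norm (q : ℝ) (hq : 1 ≤ q) (β : ℕ) {t : ℂ} (ht : 1 ≤ ‖t‖) :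
    ‖f5 q (β + 1) t‖ ≤ 2 * (β + 1) * (1 + √q) * ‖t‖ ^ (β + 1) := by
  have ht0 : t ≠ 0 := norm_pos_iff.mp (one_pos.trans_le ht)
  have hs : 1 ≤ √q := Real.one_le_sqrt.mpr hq
  have hs_inv : (√q)⁻¹ ≤ 1 := inv_le_one_of_one_le₀ hs
  have hnorm_s : ‖(√q : ℂ)‖ = √q := Complex.norm_of_nonneg (Real.sqrt_nonneg q)
  have hnorm_s_inv : ‖(((√q)⁻¹ : ℝ) : ℂ)‖ = (√q)⁻¹ :=
    Complex.norm_of_nonneg (inv_nonneg.mpr (Real.sqrt_nonneg q))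
  have hhead : ‖1 + (t ^ 2)⁻¹ + t⁻¹ * (√q - (((√q)⁻¹ : ℝ) : ℂ))‖ ≤ 2 * (1 + √q) :=
    calc _ ≤ 1 + (‖t‖ ^ 2)⁻¹ + ‖t‖⁻¹ * (‖(√q : ℂ)‖ + ‖(((√q)⁻¹ : ℝ) : ℂ)‖) := by
          refine norm_add₃_le.trans ?_
          simp only [norm_one, norm_inv, norm_pow, norm_mul]
          gcongr
          exact norm_sub_le _ _
      _ ≤ 1 + 1 + 1 * (√q + 1) := by
          rw [hnorm_s, hnorm_s_inv]
          gcongr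
          exacts [inv_le_one_of_one_le₀ (one_le_pow₀ ht), inv_le_one_of_one_le₀ ht]
      _ ≤ 2 * (1 + √q) := by linarith
  have hsum : ‖∑ j ∈ range β, (t ^ 2) ^ j‖ ≤ β * ‖t‖ ^ (2 * β) := by
    have h := norm_sum_range_pow_le (x := t ^ 2) (by rw [norm_pow]; exact one_le_pow₀ ht) β
    rwa [norm_pow, ← pow_mul] at h
  have htail : ‖(1 - (((√q)⁻¹ : ℝ) : ℂ) * t) * (1 + √q * t)‖ ≤ 2 * (1 + √q) * ‖t‖ ^ 2 := by
    have h₁ : ‖1 - (((√q)⁻¹ : ℝ) : ℂ) * t‖ ≤ 2 * ‖t‖ := by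
      rw [sub_eq_add_neg, ← neg_mul]
      refine (norm_one_add_mul_le ht _).trans ?_
      rw [norm_neg, hnorm_s_inv]
      gcongr
      linarith
    have h₂ : ‖1 + √q * t‖ ≤ (1 + √q) * ‖t‖ :=
      (norm_one_add_mul_le ht _).trans_eq (by rw [hnorm_s])
    calc _ ≤ (2 * ‖t‖) * ((1 + √q) * ‖t‖) := by rw [norm_mul]; gcongr
      _ = 2 * (1 + √q) * ‖t‖ ^ 2 := by ring
  calc ‖f5 q (β + 1) t‖
      ≤ ‖t‖ ^ (β + 1) * (2 * (1 + √q)) +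
          (‖t‖ ^ (β + 1))⁻¹ * (β * ‖t‖ ^ (2 * β)) * (2 * (1 + √q) * ‖t‖ ^ 2) := by
        rw [f5_succ_eq q β ht0]
        refine (norm_add_le _ _).trans (add_le_add ?_ (norm_mul₃_le.trans ?_))
        · rw [norm_mul, norm_pow]
          gcongr
        · rw [norm_inv, norm_pow]
          gcongr
    _ = 2 * (β + 1) * (1 + √q) * ‖t‖ ^ (β + 1) := by
        field_simp
        ring

theorem norm_f5_succ_le_max (q : ℝ) (hq : 1 ≤ q) (β : ℕ) {t : ℂ} (ht : t ≠ 0) :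
    ‖f5 q (β + 1) t‖ ≤ 2 * (β + 1) * (1 + √q) * max ‖t‖ ‖t‖⁻¹ ^ (β + 1) := by
  rcases le_total 1 ‖t‖ with h | h
  · rw [max_eq_left ((inv_le_one_of_one_le₀ h).trans h)]
    exact norm_f5_succ_le_of_one_le_norm q hq β h
  · have h' : 1 ≤ ‖t‖⁻¹ := (one_le_inv₀ (norm_pos_iff.mpr ht)).mpr h
    rw [max_eq_right (h.trans h'), ← norm_inv, ← f5_succ_inv q (one_pos.trans_le hq) β ht]
    exact norm_f5_succ_le_of_one_le_norm q hq β (by rwa [norm_inv])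

/-- For `q ≥ 2` and an integer `α ≥ 1`, the function
`f(t) = (1-q^{-1/2}t)/(1-t²)(1+q^{1/2}t) t^{-α} + (1-q^{-1/2}t^{-1})/(1-t^{-2})(1+q^{1/2}t^{-1}) t^{α}`
is holomorphic on `ℂ^×`, satisfies `f(t) = f(t⁻¹)`, and
`|f(t)| ≤ 4(α+1)(1+q^{1/2}) max(|t|,|t|⁻¹)^α`. -/
theorem stmt_5 (q : ℝ) (hq : 2 ≤ q) (α : ℕ) (hα : 1 ≤ α) :
    (∀ t : ℂ, t ≠ 0 → DifferentiableAt ℂ (f5 q α) t) ∧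
    (∀ t : ℂ, t ≠ 0 → t ^ 2 ≠ 1 →
      f5 q α t = (1 - (((Real.sqrt q)⁻¹ : ℝ) : ℂ) * t) / (1 - t ^ 2) *
          (1 + ((Real.sqrt q : ℝ) : ℂ) * t) * t ^ (-(α : ℤ)) +
        (1 - (((Real.sqrt q)⁻¹ : ℝ) : ℂ) * t⁻¹) / (1 - (t⁻¹) ^ 2) *
          (1 + ((Real.sqrt q : ℝ) : ℂ) * t⁻¹) * t ^ (α : ℤ)) ∧
    (∀ t : ℂ, t ≠ 0 → f5 q α t⁻¹ = f5 q α t) ∧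
    (∀ t : ℂ, t ≠ 0 →
      ‖f5 q α t‖ ≤ 4 * (α + 1) * (1 + Real.sqrt q) * (max ‖t‖ ‖t‖⁻¹) ^ α) := by
  obtain ⟨β, rfl⟩ := Nat.exists_eq_add_of_le' hα
  have hq₀ : 0 < q := by linarith
  refine ⟨fun t ht => differentiableAt_f5 q _ ht,
    fun t ht ht2 => f5_succ_eq_rational q hq₀ β ht ht2,
    fun t ht => f5_succ_inv q hq₀ β ht,
    fun t ht => (norm_f5_succ_le_max q (by linarith) β ht).trans ?_⟩
  gcongr ?_ * _ * _
  push_cast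
  linarith
end

section
/- For any $(t:n)$ with $t, n$ algebraic integers of a totally real field $F$ of degree $d_F$, $n \neq 0$, $t^2 - 4n \neq 0$, and any nonzero ideal $\mathfrak{a} \subseteq \mathcal{O}_F$ such that $t^2 - 4n \in \mathfrak{a}$, the vector $\xi = (t^{(v)}/\sqrt{|n|_v})_{v \in \Sigma_\infty} \in \mathbb{R}^{d_F}$ satisfies $\|\xi\|^2 \geq d_F^{1/2}\big(\mathrm{Nr}(n^{-1}\mathfrak{a})^{1/d_F} - 4\big)$, where $\|\cdot\|$ is the Euclidean norm. -/
/-!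
Since `t² - 4n ∈ 𝔞`, `Nr 𝔞 ≤ |Nr(t² - 4n)| = ∏_v |t_v² - 4 n_v|`, while
`|Nr n| = ∏_v |n_v|`. Hence `Nr(n⁻¹𝔞)` is at most the product of the `d` numbers
`|t_v² - 4 n_v| / |n_v|`, each of which is at most `t_v² / |n_v| + 4`. AM-GM then
gives `d (Nr(n⁻¹𝔞)^{1/d} - 4) ≤ ‖ξ‖²`, which is stronger than the claim as `√d ≤ d`.
-/
open NumberField Finset

lemma abs_sq_sub_four_mul_div_abs_le (T N : ℝ) : |T ^ 2 - 4 * N| / |N| ≤ T ^ 2 / |N| + 4 := by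
  calc |T ^ 2 - 4 * N| / |N| ≤ (T ^ 2 + 4 * |N|) / |N| := by
        gcongr
        calc |T ^ 2 - 4 * N| ≤ |T ^ 2| + |4 * N| := abs_sub _ _
          _ = T ^ 2 + 4 * |N| := by rw [abs_sq, abs_mul, abs_of_pos four_pos]
    _ = T ^ 2 / |N| + 4 * (|N| / |N|) := by ring
    _ ≤ T ^ 2 / |N| + 4 := by grw [div_self_le_one]; simp

lemma rpow_inv_card_le_sum_div_card {ι : Type*} [Fintype ι] [Nonempty ι] {z : ι → ℝ}
    (hz : ∀ i, 0 ≤ z i) :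
    (∏ i, z i) ^ (Fintype.card ι : ℝ)⁻¹ ≤ (∑ i, z i) / Fintype.card ι := by
  simpa using Real.geom_mean_le_arith_mean univ (fun _ => 1) z (fun _ _ => zero_le_one)
    (by simpa using Fintype.card_pos) (fun i _ => hz i)

lemma card_mul_rpow_inv_card_sub_four_le {ι : Type*} [Fintype ι] [Nonempty ι] (T N : ι → ℝ)
    {X : ℝ} (hX₀ : 0 ≤ X) (hX : X ≤ ∏ i, |T i ^ 2 - 4 * N i| / |N i|) :
    Fintype.card ι * (X ^ (Fintype.card ι : ℝ)⁻¹ - 4) ≤ ∑ i, T i ^ 2 / |N i| := by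
  set d : ℝ := (Fintype.card ι : ℝ) with hd_def
  have hd : 0 < d := by simpa [hd_def] using Fintype.card_pos
  have hamgm : X ^ d⁻¹ ≤ (∑ i, T i ^ 2 / |N i| + 4 * d) / d :=
    calc X ^ d⁻¹ ≤ (∏ i, |T i ^ 2 - 4 * N i| / |N i|) ^ d⁻¹ := by gcongr
      _ ≤ (∑ i, |T i ^ 2 - 4 * N i| / |N i|) / d :=
          rpow_inv_card_le_sum_div_card fun i => by positivity
      _ ≤ (∑ i, (T i ^ 2 / |N i| + 4)) / d := by
          gcongr with i; exact abs_sq_sub_four_mul_div_abs_le _ _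
      _ = _ := by simp [hd_def, sum_add_distrib, mul_comm]
  rw [le_div_iff₀ hd] at hamgm
  linarith

lemma Complex.re_sq_sub_four_mul {z w : ℂ} (hz : z.im = 0) :
    (z ^ 2 - 4 * w).re = z.re ^ 2 - 4 * w.re := by
  simp [sq, hz]

lemma sqrt_mul_le_of_mul_le {d y S : ℝ} (hd : 1 ≤ d) (hS : 0 ≤ S) (h : d * y ≤ S) :
    √d * y ≤ S := by
  rcases le_or_gt y 0 with hy | hy
  · exact (mul_nonpos_of_nonneg_of_nonpos (Real.sqrt_nonneg d) hy).trans hS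
  · exact le_trans (by gcongr; exact Real.sqrt_le_self_iff.2 (Or.inr hd)) h

lemma Ideal.absNorm_le_abs_norm_of_mem {S : Type*} [CommRing S] [IsDedekindDomain S]
    [Module.Free ℤ S] [Module.Finite ℤ S] {I : Ideal S} {x : S} (hx : x ≠ 0) (hxI : x ∈ I) :
    (Ideal.absNorm I : ℝ) ≤ |(Algebra.norm ℤ x : ℝ)| := by
  have hpos : 0 < |Algebra.norm ℤ x| := abs_pos.2 (Algebra.norm_ne_zero_iff.2 hx)
  exact_mod_cast Int.le_of_dvd hpos ((dvd_abs _ _).2 (Ideal.absNorm_dvd_norm_of_mem hxI))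

namespace NumberField

variable {K : Type*} [Field K] [NumberField K]

lemma prod_norm_embeddings_eq_abs_norm (x : 𝓞 K) :
    ∏ φ : K →+* ℂ, ‖φ x‖ = |(Algebra.norm ℤ x : ℝ)| := by
  classical
  rw [Fintype.prod_equiv (RingHom.equivRatAlgHom K ℂ) (fun φ => ‖φ x‖) (fun σ => ‖σ x‖)
      fun _ => rfl, ← norm_prod, ← Algebra.norm_eq_prod_embeddings, ← Algebra.coe_norm_int]
  simp

lemma prod_abs_re_embeddings_eq_abs_norm (htr : ∀ (φ : K →+* ℂ) (x : K), (φ x).im = 0)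
    (x : 𝓞 K) : ∏ φ : K →+* ℂ, |(φ x).re| = |(Algebra.norm ℤ x : ℝ)| := by
  simp_rw [Complex.abs_re_eq_norm.2 (htr _ _)]
  exact prod_norm_embeddings_eq_abs_norm x

lemma absNorm_div_abs_norm_le_prod (htr : ∀ (φ : K →+* ℂ) (x : K), (φ x).im = 0)
    {t n : 𝓞 K} (hΔ : t ^ 2 - 4 * n ≠ 0) {𝔞 : Ideal (𝓞 K)} (hmem : t ^ 2 - 4 * n ∈ 𝔞) :
    (Ideal.absNorm 𝔞 : ℝ) / |(Algebra.norm ℤ n : ℝ)| ≤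
      ∏ φ : K →+* ℂ, |(φ t).re ^ 2 - 4 * (φ n).re| / |(φ n).re| := by
  have hΔ_re (φ : K →+* ℂ) :
      (φ ((t ^ 2 - 4 * n : 𝓞 K) : K)).re = (φ t).re ^ 2 - 4 * (φ n).re := by
    rw [← Complex.re_sq_sub_four_mul (htr φ t)]
    simp only [RingOfIntegers.coe_eq_algebraMap, map_sub, map_pow, map_mul, map_ofNat]
  rw [prod_div_distrib, prod_abs_re_embeddings_eq_abs_norm htr n]
  simp_rw [← hΔ_re, prod_abs_re_embeddings_eq_abs_norm htr]
  gcongr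
  exact Ideal.absNorm_le_abs_norm_of_mem hΔ hmem

end NumberField

theorem stmt_6_general (F : Type*) [Field F] [NumberField F]
    (htr : ∀ (φ : F →+* ℂ) (x : F), (φ x).im = 0)
    (t n : 𝓞 F) (hΔ : t ^ 2 - 4 * n ≠ 0)
    (𝔞 : Ideal (𝓞 F)) (hmem : t ^ 2 - 4 * n ∈ 𝔞) :
    Real.sqrt (Module.finrank ℚ F) *
        (((Ideal.absNorm 𝔞 : ℝ) / |((Algebra.norm ℤ n : ℤ) : ℝ)|) ^
            ((Module.finrank ℚ F : ℝ))⁻¹ - 4) ≤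
      ∑ φ : F →+* ℂ,
        (φ (algebraMap (𝓞 F) F t)).re ^ 2 / |(φ (algebraMap (𝓞 F) F n)).re| := by
  rw [← Embeddings.card F ℂ]
  refine sqrt_mul_le_of_mul_le (mod_cast Fintype.card_pos) (by positivity) ?_
  exact card_mul_rpow_inv_card_sub_four_le _ _ (by positivity)
    (absNorm_div_abs_norm_le_prod htr hΔ hmem)

/-- Let `F` be a totally real number field of degree `d`, `t, n` algebraic
integers with `n ≠ 0`, `t² - 4n ≠ 0`, and `𝔞` a nonzero ideal containing `t² - 4n`.  Then the
vector `ξ = (t^{(v)}/√|n|_v)_v ∈ ℝ^d` satisfies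
`‖ξ‖² ≥ √d (Nr(n⁻¹𝔞)^{1/d} - 4)`. -/
theorem stmt_6 (F : Type*) [Field F] [NumberField F]
    (htr : ∀ (φ : F →+* ℂ) (x : F), (φ x).im = 0)
    (t n : 𝓞 F) (hn : n ≠ 0) (hΔ : t ^ 2 - 4 * n ≠ 0)
    (𝔞 : Ideal (𝓞 F)) (h𝔞 : 𝔞 ≠ 0) (hmem : t ^ 2 - 4 * n ∈ 𝔞) :
    Real.sqrt (Module.finrank ℚ F) *
        (((Ideal.absNorm 𝔞 : ℝ) / |((Algebra.norm ℤ n : ℤ) : ℝ)|) ^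
            ((Module.finrank ℚ F : ℝ))⁻¹ - 4) ≤
      ∑ φ : F →+* ℂ,
        (φ (algebraMap (𝓞 F) F t)).re ^ 2 / |(φ (algebraMap (𝓞 F) F n)).re| :=
  stmt_6_general F htr t n hΔ 𝔞 hmem
end

section
/- Let $d \geq 1$, $L = (L_j)_{j=1}^{d} \in \mathbb{R}_{>0}^{d}$ with $\underline{L} = \min_j L_j > 1$, and $f_L(x) = \prod_{j=1}^{d}(1 + |x_j|)^{-L_j}$ on $\mathbb{R}^d$. Then there exists a constant $C > 0$ (depending only on $d$ and $L$) such that for any $A \geq 0$ and any pair of full-rank lattices $\Lambda \subseteq \Lambda_0 \subset \mathbb{R}^d$, one has $\sum_{\xi \in \Lambda \setminus \{0\},\, \|\xi\| \geq A} f_L(\xi) \leq C\, r(\Lambda_0)^{-d}(1 + r(\Lambda_0))^{d\bar{L}} \max(A, r(\Lambda))^{1 - \underline{L}}$, where $\bar{L} = \max_j L_j$ and $r(\Lambda) = \tfrac{1}{2}\inf_{\xi \in \Lambda \setminus \{0\}} \|\xi\|$. -/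
/-!
Put `s = 2 r(Λ₀) / √d`. Distinct points of `Λ ⊆ Λ₀` are at distance at least
`2 r(Λ₀) = s √d`, so they lie in distinct cells of the cubical grid of mesh `s`, and on the
cell with indices `k_j` (with `|x_j| ∈ [s k_j, s (k_j + 1))`) `f_L` is at most
`∏_j (1 + s k_j)^{-l}`, `l = min L`. A point of norm `R ≥ max(A, 2 r(Λ))` has a coordinate of
size at least `R / √d`, so in the sum over cells one coordinate only runs over the tail
`1 + s k ≥ Q ≈ R / √d` of the one-dimensional sum, which costs `O((1 + 1/s) Q^{1-l})`, while
every other coordinate costs `O(1 + 1/s)`.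
-/

/-- `f_L(x) = ∏_j (1+|x_j|)^{-L_j}`. -/
noncomputable def fL (d : ℕ) (L : Fin d → ℝ) (x : EuclideanSpace ℝ (Fin d)) : ℝ :=
  ∏ j, (1 + |x j|) ^ (-(L j))

/-- The packing radius `r(Λ)`, half the length of a shortest nonzero vector. -/
noncomputable def rLat (d : ℕ) (Λ : Submodule ℤ (EuclideanSpace ℝ (Fin d))) : ℝ :=
  (1 / 2) * sInf ((fun x : EuclideanSpace ℝ (Fin d) => ‖x‖) '' {x | x ∈ Λ ∧ x ≠ 0})

open scoped ENNReal

noncomputable def zetaSum (l : ℝ) : ℝ := ∑' n : ℕ, ((n : ℝ) + 1) ^ (-l)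

section OneDimensional

variable {a c l Q : ℝ}

lemma summable_nat_add_one_rpow_neg (hl : 1 < l) :
    Summable fun n : ℕ => ((n : ℝ) + 1) ^ (-l) := by
  have h := (summable_nat_add_iff 1).mpr (Real.summable_nat_rpow.mpr (neg_lt_neg hl))
  simpa only [Nat.cast_add, Nat.cast_one] using h

lemma zetaSum_pos (hl : 1 < l) : 0 < zetaSum l :=
  (summable_nat_add_one_rpow_neg hl).tsum_pos (fun _ => by positivity) 0 (by positivity)

lemma tsum_ofReal_nat_add_one_rpow_neg (hl : 1 < l) :
    ∑' n : ℕ, ENNReal.ofReal (((n : ℝ) + 1) ^ (-l)) = ENNReal.ofReal (zetaSum l) :=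
  (ENNReal.ofReal_tsum_of_nonneg (fun _ => by positivity) (summable_nat_add_one_rpow_neg hl)).symm

/-- Grouping the terms into blocks of `⌈c / a⌉` consecutive ones, the `q`-th block is dominated
by `⌈c / a⌉` copies of `(c (q + 1))^{-l}`. -/
lemma tsum_ofReal_add_mul_rpow_neg_le (hl : 1 < l) (ha : 0 < a) (hc : 0 < c) :
    ∑' k : ℕ, ENNReal.ofReal ((c + a * k) ^ (-l)) ≤
      ENNReal.ofReal ((c / a + 1) * c ^ (-l) * zetaSum l) := by
  set N := ⌈c / a⌉₊
  have : NeZero N := ⟨(Nat.ceil_pos.mpr (div_pos hc ha)).ne'⟩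
  have hcN : c ≤ a * N := by
    have := Nat.le_ceil (c / a)
    rwa [div_le_iff₀ ha, mul_comm] at this
  have hblock (k : ℕ) : (c + a * k) ^ (-l) ≤ c ^ (-l) * (((k / N : ℕ) : ℝ) + 1) ^ (-l) := by
    rw [← Real.mul_rpow hc.le (by positivity)]
    refine Real.rpow_le_rpow_of_nonpos (by positivity) ?_ (by linarith)
    have : ((k / N : ℕ) : ℝ) * N ≤ k := by exact_mod_cast Nat.div_mul_le_self k N
    nlinarith [(by positivity : (0 : ℝ) ≤ (k / N : ℕ))]
  set g : ℕ → ℝ≥0∞ := fun q => ENNReal.ofReal (c ^ (-l) * ((q : ℝ) + 1) ^ (-l))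
  have hc' : 0 ≤ c ^ (-l) := by positivity
  calc ∑' k : ℕ, ENNReal.ofReal ((c + a * k) ^ (-l))
      ≤ ∑' k : ℕ, g (k / N) :=
        ENNReal.tsum_le_tsum fun k => ENNReal.ofReal_le_ofReal (hblock k)
    _ = ∑' p : ℕ × Fin N, g p.1 := (Nat.divModEquiv N).tsum_eq fun p => g p.1
    _ = N * (ENNReal.ofReal (c ^ (-l)) * ENNReal.ofReal (zetaSum l)) := by
        simp only [g, ENNReal.ofReal_mul hc', ENNReal.tsum_prod', tsum_fintype, Finset.sum_const,
          Finset.card_univ, Fintype.card_fin, nsmul_eq_mul, ENNReal.tsum_mul_left,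
          tsum_ofReal_nat_add_one_rpow_neg hl]
        ring
    _ ≤ ENNReal.ofReal (c / a + 1) *
          (ENNReal.ofReal (c ^ (-l)) * ENNReal.ofReal (zetaSum l)) := by
        gcongr
        rw [← ENNReal.ofReal_natCast]
        exact ENNReal.ofReal_le_ofReal (Nat.ceil_lt_add_one (by positivity)).le
    _ = ENNReal.ofReal ((c / a + 1) * c ^ (-l) * zetaSum l) := by
        rw [← ENNReal.ofReal_mul (by positivity), ← ENNReal.ofReal_mul (by positivity),
          mul_assoc]

noncomputable def tailWeight (a l Q : ℝ) (k : ℕ) : ℝ≥0∞ :=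
  if Q ≤ 1 + a * k then ENNReal.ofReal ((1 + a * k) ^ (-l)) else 0

/-- On the support of the tail weight, `1 + a k ≥ (Q + a k) / 2`. -/
lemma tsum_tailWeight_le (hl : 1 < l) (ha : 0 < a) (hQ : 1 ≤ Q) :
    ∑' k, tailWeight a l Q k ≤
      ENNReal.ofReal (2 ^ l * (1 / a + 1) * zetaSum l * Q ^ (1 - l)) := by
  have hQ0 : 0 < Q := by linarith
  calc ∑' k, tailWeight a l Q k
      ≤ ∑' k : ℕ, ENNReal.ofReal ((Q / 2 + a / 2 * k) ^ (-l)) := by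
        refine ENNReal.tsum_le_tsum fun k => ?_
        unfold tailWeight
        split_ifs with hk
        · have : 0 ≤ a * k := by positivity
          exact ENNReal.ofReal_le_ofReal
            (Real.rpow_le_rpow_of_nonpos (by positivity) (by linarith) (by linarith))
        · exact zero_le
    _ ≤ ENNReal.ofReal ((Q / 2 / (a / 2) + 1) * (Q / 2) ^ (-l) * zetaSum l) :=
        tsum_ofReal_add_mul_rpow_neg_le hl (by positivity) (by positivity)
    _ ≤ ENNReal.ofReal (2 ^ l * (1 / a + 1) * zetaSum l * Q ^ (1 - l)) := by
        refine ENNReal.ofReal_le_ofReal ?_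
        have hhalf : (Q / 2) ^ (-l) = 2 ^ l * Q ^ (-l) := by
          rw [Real.div_rpow hQ0.le zero_le_two, Real.rpow_neg zero_le_two, div_inv_eq_mul,
            mul_comm]
        have hpow : Q * Q ^ (-l) = Q ^ (1 - l) := by
          rw [sub_eq_add_neg, Real.rpow_add hQ0, Real.rpow_one]
        have hratio : Q / 2 / (a / 2) + 1 ≤ Q * (1 / a + 1) := by
          rw [show Q / 2 / (a / 2) = Q * (1 / a) by field_simp]
          nlinarith
        calc (Q / 2 / (a / 2) + 1) * (Q / 2) ^ (-l) * zetaSum l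
            ≤ Q * (1 / a + 1) * (2 ^ l * Q ^ (-l)) * zetaSum l := by
              rw [hhalf]; gcongr; exact (zetaSum_pos hl).le
          _ = 2 ^ l * (1 / a + 1) * zetaSum l * Q ^ (1 - l) := by rw [← hpow]; ring

lemma tsum_bool_prod_snd (g : ℕ → ℝ≥0∞) :
    ∑' p : Bool × ℕ, g p.2 = 2 * ∑' k, g k := by
  rw [ENNReal.tsum_prod', tsum_fintype, Fintype.sum_bool, two_mul]

end OneDimensional

lemma tsum_pi_prod_le_prod_tsum {ι κ : Type*} [Fintype ι] (f : ι → κ → ℝ≥0∞) :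
    ∑' x : ι → κ, ∏ i, f i (x i) ≤ ∏ i, ∑' k, f i k := by
  classical
  rw [ENNReal.tsum_eq_iSup_sum]
  refine iSup_le fun F => ?_
  calc ∑ x ∈ F, ∏ i, f i (x i)
      ≤ ∑ x ∈ Fintype.piFinset fun i => F.image (· i), ∏ i, f i (x i) :=
        Finset.sum_le_sum_of_subset fun x hx =>
          Fintype.mem_piFinset.2 fun i => Finset.mem_image_of_mem _ hx
    _ = ∏ i, ∑ k ∈ F.image (· i), f i k := (Finset.prod_univ_sum _ _).symm
    _ ≤ ∏ i, ∑' k, f i k := Finset.prod_le_prod' fun i _ => ENNReal.sum_le_tsum _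

lemma exists_norm_le_sqrt_card_mul_abs {ι : Type*} [Fintype ι] [Nonempty ι]
    (x : EuclideanSpace ℝ ι) : ∃ j, ‖x‖ ≤ √(Fintype.card ι) * |x j| := by
  classical
  obtain ⟨j, hj⟩ := Finite.exists_max fun i => |x i|
  refine ⟨j, ((EuclideanSpace.basisFun ι ℝ).norm_le_card_mul_iSup_norm_inner x).trans ?_⟩
  gcongr
  refine ciSup_le fun i => ?_
  simpa [EuclideanSpace.inner_single_left] using hj i

/-- The sign of `x` and the index `k` with `|x| ∈ [k s, (k + 1) s)`. -/
noncomputable def cell (s x : ℝ) : Bool × ℕ := (decide (0 ≤ x), ⌊|x| / s⌋₊)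

section Cell

variable {s x y : ℝ}

lemma mul_cell_snd_le_abs (hs : 0 < s) : s * (cell s x).2 ≤ |x| := by
  have := Nat.floor_le (div_nonneg (abs_nonneg x) hs.le)
  rw [cell]; rwa [le_div_iff₀ hs, mul_comm] at this

lemma abs_sub_lt_mul_cell_snd (hs : 0 < s) : |x| - s < s * (cell s x).2 := by
  have := Nat.lt_floor_add_one (|x| / s)
  rw [cell]; rw [div_lt_iff₀ hs] at this; linarith

lemma abs_sub_lt_of_cell_eq (hs : 0 < s) (h : cell s x = cell s y) : |x - y| < s := by
  have hx₁ := mul_cell_snd_le_abs (x := x) hs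
  have hx₂ := abs_sub_lt_mul_cell_snd (x := x) hs
  have hy₁ := mul_cell_snd_le_abs (x := y) hs
  have hy₂ := abs_sub_lt_mul_cell_snd (x := y) hs
  rw [h] at hx₁ hx₂
  have hsign : (0 ≤ x ↔ 0 ≤ y) := by simpa [cell] using congrArg Prod.fst h
  rw [abs_sub_lt_iff]
  rcases le_or_gt 0 x with hx | hx
  · have hy := hsign.1 hx
    rw [abs_of_nonneg hx] at hx₁ hx₂; rw [abs_of_nonneg hy] at hy₁ hy₂
    constructor <;> linarith
  · have hy : y < 0 := not_le.1 (mt hsign.2 (not_le.2 hx))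
    rw [abs_of_neg hx] at hx₁ hx₂; rw [abs_of_neg hy] at hy₁ hy₂
    constructor <;> linarith

end Cell

lemma norm_sub_lt_of_cell_eq {ι : Type*} [Fintype ι] [Nonempty ι] {s : ℝ} (hs : 0 < s)
    {x y : EuclideanSpace ℝ ι} (h : ∀ j, cell s (x j) = cell s (y j)) :
    ‖x - y‖ < s * √(Fintype.card ι) := by
  obtain ⟨j, hj⟩ := exists_norm_le_sqrt_card_mul_abs (x - y)
  have hcard : 0 < √(Fintype.card ι) := Real.sqrt_pos.2 (by exact_mod_cast Fintype.card_pos)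
  calc ‖x - y‖ ≤ √(Fintype.card ι) * |x j - y j| := hj
    _ < √(Fintype.card ι) * s := by gcongr; exact abs_sub_lt_of_cell_eq hs (h j)
    _ = s * √(Fintype.card ι) := mul_comm _ _

lemma ofReal_rpow_neg_le_tailWeight {s l L Q x : ℝ} (hs : 0 < s) (hl : 0 ≤ l) (hlL : l ≤ L)
    (hQ : Q ≤ 1 + s * (cell s x).2) :
    ENNReal.ofReal ((1 + |x|) ^ (-L)) ≤ tailWeight s l Q (cell s x).2 := by
  have hcell := mul_cell_snd_le_abs (x := x) hs
  rw [tailWeight, if_pos hQ]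
  refine ENNReal.ofReal_le_ofReal ?_
  calc (1 + |x|) ^ (-L) ≤ (1 + |x|) ^ (-l) :=
        Real.rpow_le_rpow_of_exponent_le (by linarith [abs_nonneg x]) (neg_le_neg hlL)
    _ ≤ (1 + s * (cell s x).2) ^ (-l) :=
        Real.rpow_le_rpow_of_nonpos (by positivity) (by linarith) (neg_nonpos.2 hl)

theorem tsum_prod_rpow_neg_le_of_separated {ι : Type*} [Fintype ι] [Nonempty ι]
    {S : Set (EuclideanSpace ℝ ι)} {s R l : ℝ} (hs : 0 < s) (hl : 1 < l)
    (hsep : ∀ x ∈ S, ∀ y ∈ S, x ≠ y → s * √(Fintype.card ι) ≤ ‖x - y‖)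
    (hR : ∀ x ∈ S, R ≤ ‖x‖) :
    ∑' x : S, ENNReal.ofReal (∏ j, (1 + |(x : EuclideanSpace ℝ ι) j|) ^ (-l)) ≤
      ENNReal.ofReal (Fintype.card ι * (2 * 2 ^ l * (1 / s + 1) * zetaSum l) ^ Fintype.card ι *
        max 1 (1 + R / √(Fintype.card ι) - s) ^ (1 - l)) := by
  classical
  set n := Fintype.card ι
  set Q := max 1 (1 + R / √n - s)
  set B := 2 * 2 ^ l * (1 / s + 1) * zetaSum l
  have hB : 0 ≤ B := by have := zetaSum_pos hl; positivity
  have hn : 0 < √(n : ℝ) := Real.sqrt_pos.2 (by exact_mod_cast Fintype.card_pos)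
  set Φ : S → ι → Bool × ℕ := fun x j => cell s ((x : EuclideanSpace ℝ ι) j)
  have hΦ : Function.Injective Φ := by
    intro x y hxy
    by_contra hne
    have h₁ := hsep x x.2 y y.2 (Subtype.coe_ne_coe.2 hne)
    have h₂ := norm_sub_lt_of_cell_eq hs (x := x) (y := y) fun j => congrFun hxy j
    linarith
  set w : ι → ι → Bool × ℕ → ℝ≥0∞ := fun j₀ j p =>
    tailWeight s l (if j = j₀ then Q else 1) p.2
  have hpoint (x : S) : ENNReal.ofReal (∏ j, (1 + |(x : EuclideanSpace ℝ ι) j|) ^ (-l)) ≤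
      ∑ j₀, ∏ j, w j₀ j (Φ x j) := by
    obtain ⟨j₀, hj₀⟩ := exists_norm_le_sqrt_card_mul_abs (x : EuclideanSpace ℝ ι)
    refine le_trans ?_ (Finset.single_le_sum (fun _ _ => zero_le) (Finset.mem_univ j₀))
    rw [ENNReal.ofReal_prod_of_nonneg fun _ _ => by positivity]
    refine Finset.prod_le_prod' fun j _ =>
      ofReal_rpow_neg_le_tailWeight hs (by linarith) le_rfl ?_
    have h₁ := mul_cell_snd_le_abs (x := (x : EuclideanSpace ℝ ι) j) hs
    have h₂ := abs_sub_lt_mul_cell_snd (x := (x : EuclideanSpace ℝ ι) j) hs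
    have h₀ : 0 ≤ s * (cell s ((x : EuclideanSpace ℝ ι) j)).2 := by positivity
    split_ifs with hj
    · subst hj
      have : R / √n ≤ |(x : EuclideanSpace ℝ ι) j| := by
        rw [div_le_iff₀ hn, mul_comm]; exact (hR x x.2).trans hj₀
      exact max_le (by linarith) (by linarith)
    · linarith
  have hcoord (j₀ j : ι) :
      ∑' p, w j₀ j p ≤ ENNReal.ofReal (B * (if j = j₀ then Q else 1) ^ (1 - l)) := by
    rw [tsum_bool_prod_snd, show B = 2 * (2 ^ l * (1 / s + 1) * zetaSum l) by ring, mul_assoc,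
      ENNReal.ofReal_mul zero_le_two, ENNReal.ofReal_ofNat]
    gcongr
    exact tsum_tailWeight_le hl hs (by split_ifs <;> simp [Q])
  have hgrid (j₀ : ι) :
      ∑' m : ι → Bool × ℕ, ∏ j, w j₀ j (m j) ≤
        ENNReal.ofReal (B ^ n * Q ^ (1 - l)) := by
    calc ∑' m : ι → Bool × ℕ, ∏ j, w j₀ j (m j)
        ≤ ∏ j, ∑' p, w j₀ j p := tsum_pi_prod_le_prod_tsum _
      _ ≤ ∏ j, ENNReal.ofReal (B * (if j = j₀ then Q else 1) ^ (1 - l)) :=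
          Finset.prod_le_prod' fun j _ => hcoord j₀ j
      _ = ENNReal.ofReal (B ^ n * Q ^ (1 - l)) := by
          rw [← ENNReal.ofReal_prod_of_nonneg fun _ _ => by positivity]
          simp only [apply_ite (· ^ (1 - l)), Real.one_rpow, Finset.prod_mul_distrib,
            Finset.prod_const, Finset.card_univ, Fintype.prod_ite_eq', n]
  calc ∑' x : S, ENNReal.ofReal (∏ j, (1 + |(x : EuclideanSpace ℝ ι) j|) ^ (-l))
      ≤ ∑' x : S, ∑ j₀, ∏ j, w j₀ j (Φ x j) := ENNReal.tsum_le_tsum hpoint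
    _ ≤ ∑' m : ι → Bool × ℕ, ∑ j₀, ∏ j, w j₀ j (m j) :=
        ENNReal.tsum_comp_le_tsum_of_injective hΦ fun m => ∑ j₀, ∏ j, w j₀ j (m j)
    _ = ∑ j₀, ∑' m : ι → Bool × ℕ, ∏ j, w j₀ j (m j) :=
        Summable.tsum_finsetSum fun _ _ => ENNReal.summable
    _ ≤ ∑ _j₀ : ι, ENNReal.ofReal (B ^ n * Q ^ (1 - l)) :=
        Finset.sum_le_sum fun j₀ _ => hgrid j₀
    _ = ENNReal.ofReal (n * B ^ n * Q ^ (1 - l)) := by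
        rw [Finset.sum_const, Finset.card_univ, nsmul_eq_mul, mul_assoc,
          ENNReal.ofReal_mul (Nat.cast_nonneg _), ENNReal.ofReal_natCast]

lemma exists_mem_ne_zero_of_span_eq_top {R M : Type*} [Semiring R] [AddCommMonoid M]
    [Module R M] [Nontrivial M] {s : Set M} (h : Submodule.span R s = ⊤) :
    ∃ x ∈ s, x ≠ 0 := by
  by_contra! h0
  exact bot_ne_top ((Submodule.span_eq_bot.2 h0).symm.trans h)

section PackingRadius

variable {d : ℕ} {Λ Λ₀ : Submodule ℤ (EuclideanSpace ℝ (Fin d))}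

lemma bddBelow_norm_image (Λ : Submodule ℤ (EuclideanSpace ℝ (Fin d))) :
    BddBelow ((fun x : EuclideanSpace ℝ (Fin d) => ‖x‖) '' {x | x ∈ Λ ∧ x ≠ 0}) :=
  ⟨0, by rintro _ ⟨x, -, rfl⟩; exact norm_nonneg x⟩

lemma two_mul_rLat_le_norm {x : EuclideanSpace ℝ (Fin d)} (hx : x ∈ Λ) (hx0 : x ≠ 0) :
    2 * rLat d Λ ≤ ‖x‖ := by
  have := csInf_le (bddBelow_norm_image Λ) ⟨x, ⟨hx, hx0⟩, rfl⟩
  rw [rLat]; linarith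

lemma rLat_pos [DiscreteTopology Λ] (hne : ∃ x ∈ Λ, x ≠ 0) : 0 < rLat d Λ := by
  obtain ⟨ε, hε, hball⟩ := Metric.isOpen_singleton_iff.1 (isOpen_discrete ({0} : Set Λ))
  obtain ⟨x, hx, hx0⟩ := hne
  have hε_le : ε ≤ sInf ((fun x : EuclideanSpace ℝ (Fin d) => ‖x‖) ''
      {x | x ∈ Λ ∧ x ≠ 0}) := by
    refine le_csInf ⟨‖x‖, x, ⟨hx, hx0⟩, rfl⟩ ?_
    rintro _ ⟨y, ⟨hy, hy0⟩, rfl⟩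
    by_contra! hlt
    exact hy0 (congrArg Subtype.val (hball ⟨y, hy⟩ (by simpa using hlt)))
  rw [rLat]; linarith

lemma rLat_anti (h : Λ ≤ Λ₀) (hne : ∃ x ∈ Λ, x ≠ 0) : rLat d Λ₀ ≤ rLat d Λ := by
  obtain ⟨x, hx, hx0⟩ := hne
  have hsub : {x | x ∈ Λ ∧ x ≠ 0} ⊆ {x | x ∈ Λ₀ ∧ x ≠ 0} := fun _ hy =>
    ⟨h hy.1, hy.2⟩
  have hne : Set.Nonempty {x | x ∈ Λ ∧ x ≠ 0} := ⟨x, hx, hx0⟩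
  have := csInf_le_csInf (bddBelow_norm_image Λ₀) (hne.image _)
    (Set.image_mono (f := fun x : EuclideanSpace ℝ (Fin d) => ‖x‖) hsub)
  rw [rLat, rLat]; linarith

end PackingRadius

lemma fL_le_prod_rpow_neg {d : ℕ} {L : Fin d → ℝ} {l : ℝ} (hlL : ∀ j, l ≤ L j)
    (x : EuclideanSpace ℝ (Fin d)) : fL d L x ≤ ∏ j, (1 + |x j|) ^ (-l) :=
  Finset.prod_le_prod (fun _ _ => by positivity) fun j _ =>
    Real.rpow_le_rpow_of_exponent_le (by linarith [abs_nonneg (x j)]) (neg_le_neg (hlL j))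

lemma tsum_le_of_tsum_ofReal_le {α : Type*} {f : α → ℝ} {B : ℝ} (hf : ∀ a, 0 ≤ f a)
    (hB : 0 ≤ B) (h : ∑' a, ENNReal.ofReal (f a) ≤ ENNReal.ofReal B) : ∑' a, f a ≤ B := by
  have := ENNReal.toReal_le_of_le_ofReal hB h
  rwa [ENNReal.tsum_toReal_eq fun _ => ENNReal.ofReal_ne_top,
    tsum_congr fun a => ENNReal.toReal_ofReal (hf a)] at this

lemma grid_bound_le_packing_bound {d : ℕ} (hd : 0 < d) {l Lbar ζ r₀ R M : ℝ} (hl : 1 < l)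
    (hlL : l ≤ Lbar) (hζ : 0 ≤ ζ) (hr₀ : 0 < r₀) (hR : 2 * r₀ ≤ R) (hM : 0 < M)
    (hMR : M ≤ R) :
    d * (2 * 2 ^ l * (1 / (2 * r₀ / √d) + 1) * ζ) ^ d *
        max 1 (1 + R / √d - 2 * r₀ / √d) ^ (1 - l) ≤
      d * (2 * 2 ^ l * ζ * √d) ^ d * (2 * √d) ^ (l - 1) * r₀ ^ (-(d : ℝ)) *
        (1 + r₀) ^ ((d : ℝ) * Lbar) * M ^ (1 - l) := by
  have hd1 : (1 : ℝ) ≤ d := by exact_mod_cast hd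
  have hsd : 1 ≤ √(d : ℝ) := Real.one_le_sqrt.2 hd1
  set Q := max 1 (1 + R / √d - 2 * r₀ / √d)
  have hmesh : 1 / (2 * r₀ / √d) + 1 ≤ √d * ((1 + r₀) / r₀) := by
    rw [one_div_div, div_add_one (by positivity), mul_div_assoc',
      div_le_div_iff₀ (by positivity) hr₀]
    nlinarith [mul_nonneg (sub_nonneg.2 hsd) (sq_nonneg r₀), mul_nonneg (by positivity) hr₀.le]
  have hcells : (2 * 2 ^ l * (1 / (2 * r₀ / √d) + 1) * ζ) ^ d ≤
      (2 * 2 ^ l * ζ * √d) ^ d * ((1 + r₀) ^ d * r₀ ^ (-(d : ℝ))) := by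
    calc (2 * 2 ^ l * (1 / (2 * r₀ / √d) + 1) * ζ) ^ d
        ≤ (2 * 2 ^ l * (√d * ((1 + r₀) / r₀)) * ζ) ^ d := by gcongr
      _ = (2 * 2 ^ l * ζ * √d) ^ d * ((1 + r₀) ^ d * r₀ ^ (-(d : ℝ))) := by
        rw [Real.rpow_neg hr₀.le, Real.rpow_natCast, ← div_eq_mul_inv, ← div_pow, ← mul_pow]
        ring
  have hQ : M / (2 * √d * (1 + r₀)) ≤ Q := by
    rw [div_le_iff₀ (by positivity)]
    have h₁ : 1 + (R - 2 * r₀) / √d ≤ Q := by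
      rw [sub_div]; linarith [le_max_right 1 (1 + R / √d - 2 * r₀ / √d)]
    have h₂ : 1 ≤ Q := le_max_left _ _
    have h₃ : √d + R - 2 * r₀ ≤ √d * Q := by
      have := mul_le_mul_of_nonneg_left h₁ (by positivity : (0 : ℝ) ≤ √d)
      rw [mul_add, mul_one, mul_div_cancel₀ _ (by positivity)] at this
      linarith
    nlinarith
  have htail : Q ^ (1 - l) ≤ (2 * √d) ^ (l - 1) * (1 + r₀) ^ (l - 1) * M ^ (1 - l) := by
    calc Q ^ (1 - l) ≤ (M / (2 * √d * (1 + r₀))) ^ (1 - l) :=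
          Real.rpow_le_rpow_of_nonpos (by positivity) hQ (by linarith)
      _ = (2 * √d) ^ (l - 1) * (1 + r₀) ^ (l - 1) * M ^ (1 - l) := by
          rw [Real.div_rpow hM.le (by positivity), div_eq_mul_inv,
            ← Real.rpow_neg (by positivity), neg_sub,
            Real.mul_rpow (by positivity) (by positivity)]
          ring
  have hexp : (1 + r₀) ^ d * (1 + r₀) ^ (l - 1) ≤ (1 + r₀) ^ ((d : ℝ) * Lbar) := by
    rw [← Real.rpow_natCast, ← Real.rpow_add (by positivity)]
    exact Real.rpow_le_rpow_of_exponent_le (by linarith) (by nlinarith)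
  calc d * (2 * 2 ^ l * (1 / (2 * r₀ / √d) + 1) * ζ) ^ d * Q ^ (1 - l)
      ≤ d * ((2 * 2 ^ l * ζ * √d) ^ d * ((1 + r₀) ^ d * r₀ ^ (-(d : ℝ)))) *
          ((2 * √d) ^ (l - 1) * (1 + r₀) ^ (l - 1) * M ^ (1 - l)) := by gcongr
    _ = d * (2 * 2 ^ l * ζ * √d) ^ d * (2 * √d) ^ (l - 1) * r₀ ^ (-(d : ℝ)) *
          ((1 + r₀) ^ d * (1 + r₀) ^ (l - 1)) * M ^ (1 - l) := by ring
    _ ≤ _ := by gcongr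

theorem stmt_7_general (d : ℕ) (hd : 0 < d) (L : Fin d → ℝ)
    (hL : 1 < ⨅ j, L j) :
    ∃ C > 0, ∀ Λ Λ₀ : Submodule ℤ (EuclideanSpace ℝ (Fin d)),
      DiscreteTopology Λ → DiscreteTopology Λ₀ →
      Submodule.span ℝ (Λ : Set (EuclideanSpace ℝ (Fin d))) = ⊤ →
      Submodule.span ℝ (Λ₀ : Set (EuclideanSpace ℝ (Fin d))) = ⊤ →
      Λ ≤ Λ₀ → ∀ A : ℝ, 0 ≤ A →
      (∑' ξ : {x : EuclideanSpace ℝ (Fin d) // x ∈ Λ ∧ x ≠ 0 ∧ A ≤ ‖x‖}, fL d L ξ) ≤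
        C * rLat d Λ₀ ^ (-(d : ℝ)) * (1 + rLat d Λ₀) ^ ((d : ℝ) * ⨆ j, L j) *
          max A (rLat d Λ) ^ (1 - ⨅ j, L j) := by
  have : Nonempty (Fin d) := ⟨⟨0, hd⟩⟩
  set l := ⨅ j, L j
  have hlL (j : Fin d) : l ≤ L j := ciInf_le (Finite.bddBelow_range L) j
  have hζ := zetaSum_pos hL
  refine ⟨d * (2 * 2 ^ l * zetaSum l * √d) ^ d * (2 * √d) ^ (l - 1), by positivity, ?_⟩
  intro Λ Λ₀ _ _ hspan hspan₀ hle A _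
  have hne := exists_mem_ne_zero_of_span_eq_top hspan
  have hr₀ : 0 < rLat d Λ₀ := rLat_pos (exists_mem_ne_zero_of_span_eq_top hspan₀)
  have hr : 0 < rLat d Λ := rLat_pos hne
  have hcount := tsum_prod_rpow_neg_le_of_separated
    (S := {x | x ∈ Λ ∧ x ≠ 0 ∧ A ≤ ‖x‖}) (s := 2 * rLat d Λ₀ / √d)
    (R := max A (2 * rLat d Λ)) (by positivity) hL
    (fun x hx y hy hxy => by
      rw [Fintype.card_fin, div_mul_cancel₀ _ (by positivity)]
      exact two_mul_rLat_le_norm (Λ₀.sub_mem (hle hx.1) (hle hy.1)) (sub_ne_zero.2 hxy))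
    (fun x hx => max_le hx.2.2 (two_mul_rLat_le_norm hx.1 hx.2.1))
  rw [Fintype.card_fin] at hcount
  refine tsum_le_of_tsum_ofReal_le (fun _ => by unfold fL; positivity) (by positivity)
    ((ENNReal.tsum_le_tsum fun x => ENNReal.ofReal_le_ofReal (fL_le_prod_rpow_neg hlL _)).trans
      (hcount.trans (ENNReal.ofReal_le_ofReal ?_)))
  have hlLbar : l ≤ ⨆ j, L j := (hlL ⟨0, hd⟩).trans (le_ciSup (Finite.bddAbove_range L) _)
  exact grid_bound_le_packing_bound hd hL hlLbar hζ.le hr₀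
    (le_max_of_le_right (by linarith [rLat_anti hle hne])) (by positivity)
    (max_le_max le_rfl (by linarith))

/-- For exponents `L` with `min L > 1` there is a constant `C > 0`
(depending only on `d` and `L`) so that for every pair of full-rank lattices `Λ ⊆ Λ₀` in
`ℝ^d` and every `A ≥ 0`,
`∑_{ξ ∈ Λ \ {0}, ‖ξ‖ ≥ A} f_L(ξ) ≤ C r(Λ₀)^{-d}(1+r(Λ₀))^{d·max L} max(A, r(Λ))^{1 - min L}`. -/
theorem stmt_7 (d : ℕ) (hd : 0 < d) (L : Fin d → ℝ) (hLpos : ∀ j, 0 < L j)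
    (hL : 1 < ⨅ j, L j) :
    ∃ C > 0, ∀ Λ Λ₀ : Submodule ℤ (EuclideanSpace ℝ (Fin d)),
      DiscreteTopology Λ → DiscreteTopology Λ₀ →
      Submodule.span ℝ (Λ : Set (EuclideanSpace ℝ (Fin d))) = ⊤ →
      Submodule.span ℝ (Λ₀ : Set (EuclideanSpace ℝ (Fin d))) = ⊤ →
      Λ ≤ Λ₀ → ∀ A : ℝ, 0 ≤ A →
      (∑' ξ : {x : EuclideanSpace ℝ (Fin d) // x ∈ Λ ∧ x ≠ 0 ∧ A ≤ ‖x‖}, fL d L ξ) ≤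
        C * rLat d Λ₀ ^ (-(d : ℝ)) * (1 + rLat d Λ₀) ^ ((d : ℝ) * ⨆ j, L j) *
          max A (rLat d Λ) ^ (1 - ⨅ j, L j) :=
  stmt_7_general d hd L hL
end

section
/- Let $F_v$ be a non-archimedean local field with residue cardinality $q$, $\tau \in \mathcal{O}^\times \setminus (\mathcal{O}^\times)^2$ with odd residue characteristic, and $b \in F_v$ with $|b| \geq 1$. For $t \in F_v^\times$ and $\mathrm{Re}(s) > -1/2$, define $B(t) = \int_{F_v} \max(|1-x|, |1+x|, |t|, |t^{-1}(\tau b^2 - x^2)|)^{-s-1}\, dx$ (additive measure with $\mathrm{vol}(\mathcal{O}) = q^{-d/2}$). Then $B(t) = q^{-d/2}\,\frac{1 - q^{-2s-2}}{1 - q^{-2s-1}} \cdot |t|^{s+1}|b|^{-2s-1}$ if $|t| \leq |b|$, and $B(t) = q^{-d/2}\,\frac{1 - q^{-2s-2}}{1 - q^{-2s-1}} \cdot |t|^{-s}$ if $|t| > |b|$. -/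
/-!
The ultrametric inequality, `|2| = 1` and the condition `|u² - τ| = 1` for `|u| ≤ 1` give
`|τb² - x²| = max(|b|, |x|)²`, so the integrand is `(max(R, |x|)² / |t|)^(-s-1)` with
`R = max(|t|, |b|) = q^r`. Writing `max(R, |x|)^(-σ)` as the telescoping sum
`∑ₙ 1{|x| ≤ q^(r+n)} (w^(r+n) - w^(r+n+1))`, `w = q^(-σ)`, turns the integral into a geometric
series in `q^(1-σ)`, which converges because `Re σ = 2 Re s + 2 > 1`.
-/

open Complex MeasureTheory

lemma max_max_one_eq_sq_div {T B X : ℝ} (hT : 0 < T) (hB : 1 ≤ B) :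
    max (max 1 X) (max T (T⁻¹ * max B X ^ 2)) = max (max T B) X ^ 2 / T := by
  set M := max B X
  have hM : 1 ≤ M := hB.trans (le_max_left _ _)
  have hXM : X ≤ M := le_max_right _ _
  rw [max_assoc T B X]
  rcases le_total T M with hTM | hMT
  · have hsq : T ≤ T⁻¹ * M ^ 2 := by
      rw [inv_mul_eq_div, le_div_iff₀ hT]; nlinarith
    have hMsq : M ≤ T⁻¹ * M ^ 2 := by
      rw [inv_mul_eq_div, le_div_iff₀ hT]; nlinarith
    rw [max_eq_right hTM, max_eq_right hsq,
      max_eq_right (max_le (hM.trans hMsq) (hXM.trans hMsq)), inv_mul_eq_div]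
  · have hsq : T⁻¹ * M ^ 2 ≤ T := by
      rw [inv_mul_eq_div, div_le_iff₀ hT]; nlinarith
    rw [max_eq_left hMT, max_eq_left hsq, max_eq_right (max_le (hM.trans hMT) (hXM.trans hMT)),
      sq, mul_div_cancel_right₀ _ hT.ne']

section AbsoluteValue

variable {K : Type*} [Field K] {abv : AbsoluteValue K ℝ}

lemma max_abv_one_sub_abv_one_add (hna : IsNonarchimedean abv) (h2 : abv 2 = 1) (x : K) :
    max (abv (1 - x)) (abv (1 + x)) = max 1 (abv x) := by
  apply le_antisymm
  · apply max_le
    · simpa [sub_eq_add_neg] using hna 1 (-x)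
    · simpa using hna 1 x
  · apply max_le
    · simpa [h2, one_add_one_eq_two] using hna (1 - x) (1 + x)
    · have h := hna (1 + x) (-(1 - x))
      rwa [show 1 + x + -(1 - x) = 2 * x by ring, map_mul, h2, one_mul, map_neg_eq_map,
        max_comm] at h

lemma abv_mul_sq_sub_sq {τ : K} (hna : IsNonarchimedean abv) (hτ : abv τ = 1)
    (hsq : ∀ u, abv u ≤ 1 → abv (u ^ 2 - τ) = 1) {b : K} (hb : b ≠ 0) (x : K) :
    abv (τ * b ^ 2 - x ^ 2) = max (abv b) (abv x) ^ 2 := by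
  rcases le_or_gt (abv x) (abv b) with hxb | hbx
  · have hu : abv (x / b) ≤ 1 := by
      rw [map_div₀]; exact div_le_one_of_le₀ hxb (abv.nonneg b)
    rw [show τ * b ^ 2 - x ^ 2 = -(b ^ 2 * ((x / b) ^ 2 - τ)) by field_simp; ring,
      map_neg_eq_map, map_mul, hsq _ hu, map_pow, mul_one, max_eq_left hxb]
  · have hlt : abv (τ * b ^ 2) < abv (-x ^ 2) := by
      rw [map_mul, hτ, one_mul, map_neg_eq_map, map_pow, map_pow]
      exact pow_lt_pow_left₀ hbx (abv.nonneg b) two_ne_zero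
    rw [sub_eq_neg_add, hna.add_eq_left_of_lt hlt, map_neg_eq_map, map_pow, max_eq_right hbx.le]

lemma max_abv_orbital_eq_sq_div (hna : IsNonarchimedean abv) (h2 : abv 2 = 1) {τ : K}
    (hτ : abv τ = 1) (hsq : ∀ u, abv u ≤ 1 → abv (u ^ 2 - τ) = 1) {b t : K} (hb : 1 ≤ abv b)
    (ht : t ≠ 0) (x : K) :
    max (max (abv (1 - x)) (abv (1 + x))) (max (abv t) (abv (t⁻¹ * (τ * b ^ 2 - x ^ 2)))) =
      max (max (abv t) (abv b)) (abv x) ^ 2 / abv t := by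
  have hb0 : b ≠ 0 := abv.pos_iff.1 (zero_lt_one.trans_le hb)
  rw [max_abv_one_sub_abv_one_add hna h2, map_mul, map_inv₀, abv_mul_sq_sub_sq hna hτ hsq hb0,
    max_max_one_eq_sq_div (abv.pos ht) hb]

end AbsoluteValue

lemma ofReal_sq_div_cpow_neg {N T : ℝ} (hN : 0 ≤ N) (hT : 0 ≤ T) (w : ℂ) :
    ((N ^ 2 / T : ℝ) : ℂ) ^ (-w) = (T : ℂ) ^ w * (N : ℂ) ^ (-(2 * w)) := by
  rw [← Real.rpow_two, cpow_neg, ofReal_div, div_cpow_ofReal_nonneg (by positivity) hT, inv_div,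
    div_eq_mul_inv, ← cpow_mul_ofReal_nonneg hN, ← cpow_neg]
  push_cast
  ring_nf

lemma ofReal_zpow_cpow {q : ℝ} (hq : 0 ≤ q) (m : ℤ) (z : ℂ) :
    ((q ^ m : ℝ) : ℂ) ^ z = ((q : ℂ) ^ z) ^ m := by
  rw [← Real.rpow_intCast, ← cpow_mul_ofReal_nonneg hq, ofReal_intCast, cpow_int_mul]

lemma norm_ofReal_cpow_lt_one {q : ℝ} (hq : 1 < q) {z : ℂ} (hz : z.re < 0) :
    ‖(q : ℂ) ^ z‖ < 1 := by
  rw [norm_cpow_eq_rpow_re_of_pos (by linarith)]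
  exact Real.rpow_lt_one_of_one_lt_of_neg hq hz

lemma hasSum_ite_le_mul_geometric {𝕜 : Type*} [NormedField 𝕜] [CompleteSpace 𝕜] {w : 𝕜}
    (hw : ‖w‖ < 1) (N : ℕ) :
    HasSum (fun n => if N ≤ n then (1 - w) * w ^ n else 0) (w ^ N) := by
  have hw1 : 1 - w ≠ 0 := sub_ne_zero.2 fun h => by simp [← h] at hw
  have h := (hasSum_geometric_of_norm_lt_one hw).mul_left ((1 - w) * w ^ N)
  rw [mul_comm (1 - w), mul_assoc, mul_inv_cancel₀ hw1, mul_one] at h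
  rw [← hasSum_nat_add_iff' N, Finset.sum_eq_zero fun i hi => if_neg (by simpa using hi),
    sub_zero]
  refine h.congr_fun fun n => ?_
  rw [if_pos (by omega), pow_add]; ring

lemma exists_max_zpow_eq {q : ℝ} (hq : 1 < q) {y : ℝ} (hy : y = 0 ∨ ∃ n : ℤ, y = q ^ n)
    (r : ℤ) :
    ∃ N : ℕ, max (q ^ r) y = q ^ (r + N) ∧ ∀ n : ℕ, y ≤ q ^ (r + n) ↔ N ≤ n := by
  rcases le_or_gt y (q ^ r) with hyr | hry
  · refine ⟨0, by simp [hyr], fun n => iff_of_true ?_ n.zero_le⟩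
    exact hyr.trans (zpow_le_zpow_right₀ hq.le (by omega))
  · obtain ⟨j, rfl⟩ : ∃ j : ℤ, y = q ^ j :=
      hy.resolve_left ((zpow_pos (one_pos.trans hq) r).trans hry).ne'
    have hrj : r < j := (zpow_lt_zpow_iff_right₀ hq).1 hry
    refine ⟨(j - r).toNat, ?_, fun n => ?_⟩
    · rw [max_eq_right hry.le]; congr 1; omega
    · rw [zpow_le_zpow_iff_right₀ hq]; omega

lemma hasSum_ofReal_max_zpow_cpow {q : ℝ} (hq : 1 < q) {y : ℝ}
    (hy : y = 0 ∨ ∃ n : ℤ, y = q ^ n) (r : ℤ) {σ : ℂ} (hσ : 0 < σ.re) :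
    HasSum (fun n : ℕ => if y ≤ q ^ (r + n) then
        ((q : ℂ) ^ (-σ)) ^ r * ((1 - (q : ℂ) ^ (-σ)) * ((q : ℂ) ^ (-σ)) ^ n) else 0)
      (((max (q ^ r) y : ℝ) : ℂ) ^ (-σ)) := by
  obtain ⟨N, hmax, hle⟩ := exists_max_zpow_eq hq hy r
  have hw := norm_ofReal_cpow_lt_one hq (z := -σ) (by simpa using hσ)
  have hw0 : (q : ℂ) ^ (-σ) ≠ 0 := by
    rw [Ne, cpow_eq_zero_iff, ofReal_eq_zero]; exact fun h => (one_pos.trans hq).ne' h.1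
  rw [hmax, ofReal_zpow_cpow (by linarith), zpow_add₀ hw0, zpow_natCast]
  refine ((hasSum_ite_le_mul_geometric hw N).mul_left _).congr_fun fun n => ?_
  simp only [hle, mul_ite, mul_zero]

section Radial

variable {X : Type*} [MeasurableSpace X] {μ : Measure X} {v : X → ℝ} {q e : ℝ}

lemma integral_indicator_ball (hq : 0 < q) (hmeas : ∀ n : ℤ, MeasurableSet {x | v x ≤ q ^ n})
    (hμ : ∀ n : ℤ, μ {x | v x ≤ q ^ n} = ENNReal.ofReal (q ^ ((n : ℝ) - e))) (m : ℤ) (c : ℂ) :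
    ∫ x, {x | v x ≤ q ^ m}.indicator (fun _ => c) x ∂μ =
      ((q ^ (-e) : ℝ) : ℂ) * (q : ℂ) ^ m * c := by
  rw [integral_indicator_const c (hmeas m), measureReal_def, hμ,
    ENNReal.toReal_ofReal (by positivity), sub_eq_neg_add, Real.rpow_add hq, Real.rpow_intCast,
    Complex.real_smul]
  push_cast
  ring

theorem integral_ofReal_max_zpow_cpow (hq : 1 < q) (hv : ∀ x, v x = 0 ∨ ∃ n : ℤ, v x = q ^ n)
    (hmeas : ∀ n : ℤ, MeasurableSet {x | v x ≤ q ^ n})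
    (hμ : ∀ n : ℤ, μ {x | v x ≤ q ^ n} = ENNReal.ofReal (q ^ ((n : ℝ) - e)))
    (r : ℤ) {σ : ℂ} (hσ : 1 < σ.re) :
    ∫ x, ((max (q ^ r) (v x) : ℝ) : ℂ) ^ (-σ) ∂μ =
      ((q ^ (-e) : ℝ) : ℂ) * ((1 - (q : ℂ) ^ (-σ)) / (1 - (q : ℂ) ^ (1 - σ))) *
        ((q ^ r : ℝ) : ℂ) ^ (1 - σ) := by
  have hq0 : (q : ℂ) ≠ 0 := ofReal_ne_zero.2 (one_pos.trans hq).ne'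
  have hξ1 : ‖(q : ℂ) ^ (1 - σ)‖ < 1 := norm_ofReal_cpow_lt_one hq (by simpa using hσ)
  have hξ : (q : ℂ) ^ (1 - σ) = q * (q : ℂ) ^ (-σ) := by
    rw [sub_eq_add_neg, cpow_add _ _ hq0, cpow_one]
  set w := (q : ℂ) ^ (-σ)
  set ξ := (q : ℂ) ^ (1 - σ)
  set F : ℕ → X → ℂ := fun n =>
    {x | v x ≤ q ^ (r + n)}.indicator fun _ => w ^ r * ((1 - w) * w ^ n)
  have hF : ∀ n : ℕ, ∫ x, F n x ∂μ = ((q ^ (-e) : ℝ) : ℂ) * (1 - w) * ξ ^ r * ξ ^ n := by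
    intro n
    rw [integral_indicator_ball (one_pos.trans hq) hmeas hμ, hξ, mul_zpow, mul_pow,
      zpow_add₀ hq0, zpow_natCast]
    ring
  have hsum : ∀ x, HasSum (fun n => F n x) (((max (q ^ r) (v x) : ℝ) : ℂ) ^ (-σ)) := fun x => by
    simpa only [F, Set.indicator_apply, Set.mem_ofPred_eq] using
      hasSum_ofReal_max_zpow_cpow hq (hv x) r (by linarith)
  have hint : ∀ n, Integrable (F n) μ := fun n =>
    (integrableOn_const (by rw [hμ]; exact ENNReal.ofReal_ne_top)).integrable_indicator (hmeas _)
  have hnorm : ∀ n, ∫ x, ‖F n x‖ ∂μ = ‖∫ x, F n x ∂μ‖ := fun n => by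
    simp only [F, norm_indicator_eq_indicator_norm]
    rw [integral_indicator_const _ (hmeas _), integral_indicator_const _ (hmeas _), norm_smul,
      Real.norm_of_nonneg measureReal_nonneg, smul_eq_mul]
  have hsummable : Summable fun n => ∫ x, ‖F n x‖ ∂μ := by
    simp_rw [hnorm, hF, norm_mul, norm_pow]
    exact (summable_geometric_of_lt_one (norm_nonneg _) hξ1).mul_left _
  calc ∫ x, ((max (q ^ r) (v x) : ℝ) : ℂ) ^ (-σ) ∂μ = ∫ x, ∑' n, F n x ∂μ :=
        integral_congr_ae (ae_of_all _ fun x => (hsum x).tsum_eq.symm)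
    _ = ∑' n, ∫ x, F n x ∂μ := (integral_tsum_of_summable_integral_norm hint hsummable).symm
    _ = ((q ^ (-e) : ℝ) : ℂ) * (1 - w) * ξ ^ r * (1 - ξ)⁻¹ := by
        simp_rw [hF]; rw [tsum_mul_left, tsum_geometric_of_norm_lt_one hξ1]
    _ = _ := by rw [ofReal_zpow_cpow (by linarith)]; ring

end Radial

theorem stmt_11_general (K : Type*) [Field K] [MeasurableSpace K]
    (v : K → ℝ) (q : ℝ) (hq : 1 < q) (d : ℕ)
    (hv0 : ∀ x : K, v x = 0 ↔ x = 0)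
    (hvmul : ∀ x y : K, v (x * y) = v x * v y)
    (hvadd : ∀ x y : K, v (x + y) ≤ max (v x) (v y))
    (hval : ∀ x : K, x ≠ 0 → ∃ n : ℤ, v x = q ^ n)
    (μ : Measure K)
    (hmeas : ∀ (a : K) (n : ℤ), MeasurableSet {x : K | v (x - a) ≤ q ^ n})
    (hμball : ∀ n : ℤ, μ {x : K | v x ≤ q ^ n} = ENNReal.ofReal (q ^ ((n : ℝ) - d / 2)))
    (τ b t : K) (hτu : v τ = 1)
    (hodd : v 2 = 1)
    (hhensel : ∀ u : K, v u ≤ 1 → v (u ^ 2 - τ) = 1)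
    (hb : 1 ≤ v b) (ht : t ≠ 0) (s : ℂ) (hs : -(1 / 2 : ℝ) < s.re) :
    (v t ≤ v b →
      (∫ x : K, ((max (max (v (1 - x)) (v (1 + x)))
            (max (v t) (v (t⁻¹ * (τ * b ^ 2 - x ^ 2)))) : ℝ) : ℂ) ^ (-(s + 1)) ∂μ) =
        ((q ^ (-(d : ℝ) / 2) : ℝ) : ℂ) *
          ((1 - (q : ℂ) ^ (-2 * s - 2)) / (1 - (q : ℂ) ^ (-2 * s - 1))) *
          ((v t : ℝ) : ℂ) ^ (s + 1) * ((v b : ℝ) : ℂ) ^ (-2 * s - 1)) ∧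
    (v b < v t →
      (∫ x : K, ((max (max (v (1 - x)) (v (1 + x)))
            (max (v t) (v (t⁻¹ * (τ * b ^ 2 - x ^ 2)))) : ℝ) : ℂ) ^ (-(s + 1)) ∂μ) =
        ((q ^ (-(d : ℝ) / 2) : ℝ) : ℂ) *
          ((1 - (q : ℂ) ^ (-2 * s - 2)) / (1 - (q : ℂ) ^ (-2 * s - 1))) *
          ((v t : ℝ) : ℂ) ^ (-s)) := by
  have hvals : ∀ x, v x = 0 ∨ ∃ n : ℤ, v x = q ^ n :=
    fun x => (em (x = 0)).imp (hv0 x).2 (hval x)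
  have hvnn : ∀ x, 0 ≤ v x := fun x => by
    rcases hvals x with h | ⟨n, h⟩ <;> rw [h]; positivity
  let abv : AbsoluteValue K ℝ :=
    { toFun := v, map_mul' := hvmul, nonneg' := hvnn, eq_zero' := hv0
      add_le' := fun x y => (hvadd x y).trans (max_le_add_of_nonneg (hvnn x) (hvnn y)) }
  have hpt : ∀ x, max (max (v (1 - x)) (v (1 + x))) (max (v t) (v (t⁻¹ * (τ * b ^ 2 - x ^ 2)))) =
      max (max (v t) (v b)) (v x) ^ 2 / v t :=
    max_abv_orbital_eq_sq_div (abv := abv) hvadd hodd hτu hhensel hb ht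
  obtain ⟨r, hr⟩ : ∃ r : ℤ, max (v t) (v b) = q ^ r := by
    rcases max_choice (v t) (v b) with h | h <;> rw [h]
    exacts [hval t ht, hval b (abv.pos_iff.1 (zero_lt_one.trans_le hb))]
  have hσ : 1 < (2 * (s + 1)).re := by
    rw [show (2 * (s + 1)).re = 2 * (s.re + 1) by simp]; linarith
  have hR : 0 ≤ q ^ r := (zpow_pos (one_pos.trans hq) r).le
  have hB : ∫ x : K, ((max (max (v (1 - x)) (v (1 + x)))
        (max (v t) (v (t⁻¹ * (τ * b ^ 2 - x ^ 2)))) : ℝ) : ℂ) ^ (-(s + 1)) ∂μ =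
      ((q ^ (-(d : ℝ) / 2) : ℝ) : ℂ) *
        ((1 - (q : ℂ) ^ (-2 * s - 2)) / (1 - (q : ℂ) ^ (-2 * s - 1))) *
        ((v t : ℝ) : ℂ) ^ (s + 1) * ((q ^ r : ℝ) : ℂ) ^ (-2 * s - 1) := by
    simp_rw [hpt, hr, ofReal_sq_div_cpow_neg (le_max_of_le_left hR) (hvnn t)]
    rw [integral_const_mul,
      integral_ofReal_max_zpow_cpow hq hvals (fun n => by simpa using hmeas 0 n) hμball r hσ,
      neg_div, show -(2 * (s + 1)) = -2 * s - 2 by ring, show 1 - 2 * (s + 1) = -2 * s - 1 by ring]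
    ring
  constructor
  · intro h; rw [hB, ← hr, max_eq_right h]
  · intro h
    have hT : 0 < v t := abv.pos ht
    rw [hB, ← hr, max_eq_left h.le, mul_assoc, ← cpow_add _ _ (ofReal_ne_zero.2 hT.ne')]
    ring_nf

/-- Local elliptic orbital integral over a non-dyadic non-archimedean
local field (abstracted by a multiplicative ultrametric absolute value `v` with value group
`q^ℤ` and additive Haar measure `μ` with `vol{|x| ≤ qⁿ} = qⁿ · q^{-d/2}`); `τ` is a
non-square unit (the hypothesis `hhensel`, i.e. `|u² - τ| = 1` for `u ∈ 𝒪`, is the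
consequence of non-squareness and odd residue characteristic via Hensel's lemma).
For `|b| ≥ 1`, `t ≠ 0` and `Re s > -1/2`,
`B(t) = ∫ max(|1-x|,|1+x|,|t|,|t⁻¹(τb²-x²)|)^{-s-1} dx` equals
`q^{-d/2} (1-q^{-2s-2})/(1-q^{-2s-1}) · |t|^{s+1}|b|^{-2s-1}` if `|t| ≤ |b|`, and
`q^{-d/2} (1-q^{-2s-2})/(1-q^{-2s-1}) · |t|^{-s}` if `|t| > |b|`. -/
theorem stmt_11 (K : Type*) [Field K] [MeasurableSpace K]
    (v : K → ℝ) (q : ℝ) (hq : 1 < q) (d : ℕ)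
    (hv0 : ∀ x : K, v x = 0 ↔ x = 0)
    (hvmul : ∀ x y : K, v (x * y) = v x * v y)
    (hvadd : ∀ x y : K, v (x + y) ≤ max (v x) (v y))
    (hval : ∀ x : K, x ≠ 0 → ∃ n : ℤ, v x = q ^ n)
    (μ : Measure K)
    (hmeas : ∀ (a : K) (n : ℤ), MeasurableSet {x : K | v (x - a) ≤ q ^ n})
    (hμball : ∀ n : ℤ, μ {x : K | v x ≤ q ^ n} = ENNReal.ofReal (q ^ ((n : ℝ) - d / 2)))
    (hμinv : ∀ (a : K) (S : Set K), μ {x : K | x + a ∈ S} = μ S)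
    (τ b t : K) (hτu : v τ = 1) (hτns : ¬ ∃ u : K, v u = 1 ∧ u ^ 2 = τ)
    (hodd : v 2 = 1)
    (hhensel : ∀ u : K, v u ≤ 1 → v (u ^ 2 - τ) = 1)
    (hb : 1 ≤ v b) (ht : t ≠ 0) (s : ℂ) (hs : -(1 / 2 : ℝ) < s.re) :
    (v t ≤ v b →
      (∫ x : K, ((max (max (v (1 - x)) (v (1 + x)))
            (max (v t) (v (t⁻¹ * (τ * b ^ 2 - x ^ 2)))) : ℝ) : ℂ) ^ (-(s + 1)) ∂μ) =
        ((q ^ (-(d : ℝ) / 2) : ℝ) : ℂ) *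
          ((1 - (q : ℂ) ^ (-2 * s - 2)) / (1 - (q : ℂ) ^ (-2 * s - 1))) *
          ((v t : ℝ) : ℂ) ^ (s + 1) * ((v b : ℝ) : ℂ) ^ (-2 * s - 1)) ∧
    (v b < v t →
      (∫ x : K, ((max (max (v (1 - x)) (v (1 + x)))
            (max (v t) (v (t⁻¹ * (τ * b ^ 2 - x ^ 2)))) : ℝ) : ℂ) ^ (-(s + 1)) ∂μ) =
        ((q ^ (-(d : ℝ) / 2) : ℝ) : ℂ) *
          ((1 - (q : ℂ) ^ (-2 * s - 2)) / (1 - (q : ℂ) ^ (-2 * s - 1))) *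
          ((v t : ℝ) : ℂ) ^ (-s)) :=
  stmt_11_general K v q hq d hv0 hvmul hvadd hval μ hmeas hμball τ b t hτu hodd hhensel hb ht s hs
end
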